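/- arXiv:1502.06164 — 10 statements merged into one kernel-verified Lean document; each statement's English description precedes it below -/
import Mathlib

section
/- Continuous weak maximum principle: Suppose c : ℝᵈ → ℝ is twice continuously differentiable on Ω and continuous on cl(Ω), and L[c](x) ≤ 0 for all x ∈ Ω. Then the maximum of c over cl(Ω) is at most max(0, max_{x ∈ ∂Ω} c(x)); that is, max_{x ∈ cl(Ω)} c(x) ≤ max(0, max_{x ∈ ∂Ω} c(x)). -/
noncomputable section

/-- Partial derivative in the `i`-th coordinate direction. -/
def pd (d : ℕ) (f : EuclideanSpace ℝ (Fin d) → ℝ) (i : Fin d)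
    (x : EuclideanSpace ℝ (Fin d)) : ℝ :=
  fderiv ℝ f x (EuclideanSpace.single i 1)

/-- The elliptic operator in divergence form
`L[c](x) = −div(D(x)·grad c(x)) + v(x)·grad c(x) + α(x) c(x)`. -/
def Lop (d : ℕ) (D : EuclideanSpace ℝ (Fin d) → Matrix (Fin d) (Fin d) ℝ)
    (v : EuclideanSpace ℝ (Fin d) → EuclideanSpace ℝ (Fin d))
    (α : EuclideanSpace ℝ (Fin d) → ℝ)
    (c : EuclideanSpace ℝ (Fin d) → ℝ) (x : EuclideanSpace ℝ (Fin d)) : ℝ :=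
  -(∑ i, pd d (fun y => ∑ j, D y i j * pd d c j y) i x)
    + (∑ i, v x i * pd d c i x) + α x * c x

/-! If `L[w] < 0` in `Ω`, then `w` has no nonnegative interior maximum: at such a point the
gradient vanishes and the Hessian is negative semidefinite, so ellipticity gives
`-div(D ∇w) = -tr(D ∇²w) ≥ 0` and hence `L[w] ≥ α w ≥ 0`. The barrier `φ = exp(γ x₁)` has
`L[φ] = φ (α + γ (v₁ - ∑ₖ ∂ₖ Dₖ₁) - γ² D₁₁) < 0` once `γ² λ₀` dominates the lower order terms,
so `c + εφ` is a strict subsolution: its positive values are bounded by its values on `∂Ω`, and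
letting `ε → 0` gives the bound for `c`. -/

open Filter Topology

theorem IsLocalMax.deriv_deriv_nonpos {f : ℝ → ℝ} {x₀ : ℝ} (hmax : IsLocalMax f x₀)
    (hf : ContinuousAt f x₀) : deriv (deriv f) x₀ ≤ 0 := by
  by_contra! hpos
  -- `x₀` would also be a local minimum, so `f` would be constant near `x₀`
  have hmin := isLocalMin_of_deriv_deriv_pos hpos hmax.deriv_eq_zero hf
  have hconst : f =ᶠ[𝓝 x₀] fun _ => f x₀ := by
    filter_upwards [hmax, hmin] with x h₁ h₂ using le_antisymm h₁ h₂
  have : deriv (deriv f) x₀ = 0 := by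
    rw [hconst.deriv.deriv_eq]
    simp
  exact hpos.ne' this

theorem Matrix.posSemidef_of_isSymm_of_quadratic_nonneg {n : Type*} [Fintype n]
    {A : Matrix n n ℝ} (hsymm : A.IsSymm)
    (hquad : ∀ ξ : n → ℝ, 0 ≤ ∑ i, ∑ j, ξ i * A i j * ξ j) : A.PosSemidef := by
  refine posSemidef_iff_dotProduct_mulVec.mpr ⟨?_, fun ξ => ?_⟩
  · rwa [IsHermitian, conjTranspose_eq_transpose_of_trivial]
  · simpa [dotProduct, mulVec, Finset.mul_sum, mul_assoc] using hquad ξ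

open scoped MatrixOrder in
theorem Matrix.PosSemidef.sum_mul_nonpos {n : Type*} [Fintype n] [DecidableEq n]
    {A : Matrix n n ℝ} (hA : A.PosSemidef) {H : Matrix n n ℝ}
    (hH : ∀ ξ : n → ℝ, ∑ i, ∑ j, ξ i * ξ j * H i j ≤ 0) :
    ∑ i, ∑ j, A i j * H i j ≤ 0 := by
  obtain ⟨B, rfl⟩ := CStarAlgebra.nonneg_iff_eq_star_mul_self.mp hA.nonneg
  calc ∑ i, ∑ j, (star B * B) i j * H i j
      = ∑ k, ∑ i, ∑ j, B k i * B k j * H i j := by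
        simp only [mul_apply, star_apply, star_trivial, Finset.sum_mul]
        exact (Finset.sum_congr rfl fun i _ => Finset.sum_comm).trans Finset.sum_comm
    _ ≤ 0 := Finset.sum_nonpos fun k _ => hH (B k)

section

variable {d : ℕ}

theorem fderiv_apply_eq_sum_pd (f : EuclideanSpace ℝ (Fin d) → ℝ)
    (x ξ : EuclideanSpace ℝ (Fin d)) : fderiv ℝ f x ξ = ∑ j, ξ j * pd d f j x := by
  classical
  conv_lhs => rw [← (EuclideanSpace.basisFun (Fin d) ℝ).sum_repr ξ]
  simp [pd, EuclideanSpace.basisFun_apply]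

theorem ContDiffOn.contDiffOn_pd {n : WithTop ℕ∞} {f : EuclideanSpace ℝ (Fin d) → ℝ}
    {s : Set (EuclideanSpace ℝ (Fin d))} (hf : ContDiffOn ℝ (n + 1) f s) (hs : IsOpen s)
    (j : Fin d) : ContDiffOn ℝ n (pd d f j) s :=
  ((ContinuousLinearMap.apply ℝ ℝ (EuclideanSpace.single j (1 : ℝ))).contDiff.comp_contDiffOn
    (hf.fderiv_of_isOpen hs le_rfl) :)

theorem ContDiff.continuous_pd {f : EuclideanSpace ℝ (Fin d) → ℝ} (hf : ContDiff ℝ 1 f)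
    (j : Fin d) : Continuous (pd d f j) :=
  (ContinuousLinearMap.apply ℝ ℝ (EuclideanSpace.single j (1 : ℝ))).continuous.comp
    (hf.continuous_fderiv one_ne_zero)

theorem ContDiffOn.differentiableAt_pd {f : EuclideanSpace ℝ (Fin d) → ℝ}
    {s : Set (EuclideanSpace ℝ (Fin d))} (hf : ContDiffOn ℝ 2 f s) (hs : IsOpen s)
    {x : EuclideanSpace ℝ (Fin d)} (hx : x ∈ s) (j : Fin d) :
    DifferentiableAt ℝ (pd d f j) x :=
  ((hf.contDiffOn_pd (n := 1) hs j).differentiableOn one_ne_zero x hx).differentiableAt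
    (hs.mem_nhds hx)

theorem pd_add {f g : EuclideanSpace ℝ (Fin d) → ℝ} {x : EuclideanSpace ℝ (Fin d)} (i : Fin d)
    (hf : DifferentiableAt ℝ f x) (hg : DifferentiableAt ℝ g x) :
    pd d (fun y => f y + g y) i x = pd d f i x + pd d g i x := by
  simp [pd, fderiv_fun_add hf hg]

theorem pd_const_mul {f : EuclideanSpace ℝ (Fin d) → ℝ} {x : EuclideanSpace ℝ (Fin d)}
    (i : Fin d) (a : ℝ) : pd d (fun y => a * f y) i x = a * pd d f i x := by
  simp [pd, ← smul_eq_mul, ← Pi.smul_def, fderiv_const_smul_field]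

theorem pd_mul {f g : EuclideanSpace ℝ (Fin d) → ℝ} {x : EuclideanSpace ℝ (Fin d)} (i : Fin d)
    (hf : DifferentiableAt ℝ f x) (hg : DifferentiableAt ℝ g x) :
    pd d (fun y => f y * g y) i x = f x * pd d g i x + g x * pd d f i x := by
  simp [pd, fderiv_fun_mul hf hg]

theorem pd_sum {ι : Type*} {F : ι → EuclideanSpace ℝ (Fin d) → ℝ} {x : EuclideanSpace ℝ (Fin d)}
    (i : Fin d) (s : Finset ι) (hF : ∀ j ∈ s, DifferentiableAt ℝ (F j) x) :
    pd d (fun y => ∑ j ∈ s, F j y) i x = ∑ j ∈ s, pd d (F j) i x := by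
  simp [pd, fderiv_fun_sum hF]

theorem Filter.EventuallyEq.pd_eq {f g : EuclideanSpace ℝ (Fin d) → ℝ}
    {x : EuclideanSpace ℝ (Fin d)} (h : f =ᶠ[𝓝 x] g) (i : Fin d) : pd d f i x = pd d g i x := by
  simp [_root_.pd, h.fderiv_eq]

theorem hasDerivAt_comp_line {g : EuclideanSpace ℝ (Fin d) → ℝ} {x ξ : EuclideanSpace ℝ (Fin d)}
    {t : ℝ} (hg : DifferentiableAt ℝ g (x + t • ξ)) :
    HasDerivAt (fun s : ℝ => g (x + s • ξ)) (∑ j, ξ j * pd d g j (x + t • ξ)) t := by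
  rw [← fderiv_apply_eq_sum_pd]
  have hline : HasDerivAt (fun s : ℝ => x + s • ξ) ξ t := by
    simpa using ((hasDerivAt_id t).smul_const ξ).const_add x
  exact hg.hasFDerivAt.comp_hasDerivAt t hline

theorem IsLocalMax.sum_pd_pd_nonpos {u : EuclideanSpace ℝ (Fin d) → ℝ}
    {Ω : Set (EuclideanSpace ℝ (Fin d))} (hu : ContDiffOn ℝ 2 u Ω) (hΩ : IsOpen Ω)
    {x₀ : EuclideanSpace ℝ (Fin d)} (hx₀ : x₀ ∈ Ω) (hmax : IsLocalMax u x₀)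
    (ξ : EuclideanSpace ℝ (Fin d)) :
    ∑ i, ∑ j, ξ i * ξ j * pd d (pd d u j) i x₀ ≤ 0 := by
  set f : ℝ → ℝ := fun t => u (x₀ + t • ξ)
  have hline : Continuous fun t : ℝ => x₀ + t • ξ := by fun_prop
  have hnear : ∀ᶠ t in 𝓝 (0 : ℝ), x₀ + t • ξ ∈ Ω :=
    hline.continuousAt.preimage_mem_nhds (by simpa using hΩ.mem_nhds hx₀)
  have hf' : deriv f =ᶠ[𝓝 0] fun t => ∑ j, ξ j * pd d u j (x₀ + t • ξ) := by
    filter_upwards [hnear] with t ht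
    exact (hasDerivAt_comp_line
      ((hu.differentiableOn two_ne_zero).differentiableAt (hΩ.mem_nhds ht))).deriv
  have hf'' : HasDerivAt (fun t : ℝ => ∑ j, ξ j * pd d u j (x₀ + t • ξ))
      (∑ j, ξ j * ∑ i, ξ i * pd d (pd d u j) i x₀) 0 := by
    refine HasDerivAt.fun_sum fun j _ => ?_
    have hj := hasDerivAt_comp_line (t := 0) (ξ := ξ)
      (by simpa using hu.differentiableAt_pd hΩ hx₀ j)
    simpa using hj.const_mul (ξ j)
  have hmax_f : IsLocalMax f 0 :=
    IsLocalMax.comp_continuous (g := fun t : ℝ => x₀ + t • ξ) (by simpa using hmax)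
      hline.continuousAt
  have hcont_f : ContinuousAt f 0 :=
    (hu.continuousOn.continuousAt (hΩ.mem_nhds hx₀)).comp_of_eq hline.continuousAt (by simp)
  calc ∑ i, ∑ j, ξ i * ξ j * pd d (pd d u j) i x₀
      = deriv (deriv f) 0 := by
        rw [hf'.deriv_eq, hf''.deriv, Finset.sum_comm]
        simp only [Finset.mul_sum]
        exact Finset.sum_congr rfl fun j _ => Finset.sum_congr rfl fun i _ => by ring
    _ ≤ 0 := hmax_f.deriv_deriv_nonpos hcont_f

variable {D : EuclideanSpace ℝ (Fin d) → Matrix (Fin d) (Fin d) ℝ}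
  {v : EuclideanSpace ℝ (Fin d) → EuclideanSpace ℝ (Fin d)} {α : EuclideanSpace ℝ (Fin d) → ℝ}
  {Ω : Set (EuclideanSpace ℝ (Fin d))}

theorem Lop_nonneg_of_isLocalMax {u : EuclideanSpace ℝ (Fin d) → ℝ} (hΩ : IsOpen Ω)
    (hu : ContDiffOn ℝ 2 u Ω) {x₀ : EuclideanSpace ℝ (Fin d)} (hx₀ : x₀ ∈ Ω)
    (hmax : IsLocalMax u x₀) (hu₀ : 0 ≤ u x₀)
    (hD : ∀ i j, DifferentiableAt ℝ (fun x => D x i j) x₀) (hDpsd : (D x₀).PosSemidef)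
    (hα : 0 ≤ α x₀) : 0 ≤ Lop d D v α u x₀ := by
  have hgrad : ∀ j, pd d u j x₀ = 0 := fun j => by simp [pd, hmax.fderiv_eq_zero]
  have hflux : ∀ i, pd d (fun y => ∑ j, D y i j * pd d u j y) i x₀
      = ∑ j, D x₀ i j * pd d (pd d u j) i x₀ := fun i => by
    rw [pd_sum _ _ fun j _ => (hD i j).fun_mul (hu.differentiableAt_pd hΩ hx₀ j)]
    refine Finset.sum_congr rfl fun j _ => ?_
    rw [pd_mul _ (hD i j) (hu.differentiableAt_pd hΩ hx₀ j), hgrad, zero_mul, add_zero]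
  have htrace : ∑ i, ∑ j, D x₀ i j * pd d (pd d u j) i x₀ ≤ 0 :=
    hDpsd.sum_mul_nonpos (H := Matrix.of fun i j => pd d (pd d u j) i x₀) fun ξ => by
      simpa using hmax.sum_pd_pd_nonpos hu hΩ hx₀ (WithLp.toLp 2 ξ)
  simp only [Lop, hflux, hgrad, mul_zero, Finset.sum_const_zero, add_zero]
  linarith [mul_nonneg hα hu₀]

theorem Lop_add_const_mul {f g : EuclideanSpace ℝ (Fin d) → ℝ} (hΩ : IsOpen Ω)
    (hf : ContDiffOn ℝ 2 f Ω) (hg : ContDiffOn ℝ 2 g Ω) (a : ℝ) {x : EuclideanSpace ℝ (Fin d)}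
    (hx : x ∈ Ω) (hD : ∀ i j, DifferentiableAt ℝ (fun x => D x i j) x) :
    Lop d D v α (fun y => f y + a * g y) x = Lop d D v α f x + a * Lop d D v α g x := by
  have hdiff {h : EuclideanSpace ℝ (Fin d) → ℝ} (hh : ContDiffOn ℝ 2 h Ω) {y} (hy : y ∈ Ω) :
      DifferentiableAt ℝ h y :=
    (hh.differentiableOn two_ne_zero).differentiableAt (hΩ.mem_nhds hy)
  have hflux_diff {h : EuclideanSpace ℝ (Fin d) → ℝ} (hh : ContDiffOn ℝ 2 h Ω) (i : Fin d) :
      DifferentiableAt ℝ (fun y => ∑ j, D y i j * pd d h j y) x :=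
    DifferentiableAt.fun_sum fun j _ => (hD i j).fun_mul (hh.differentiableAt_pd hΩ hx j)
  have hgrad : ∀ j, ∀ y ∈ Ω, pd d (fun y => f y + a * g y) j y = pd d f j y + a * pd d g j y :=
    fun j y hy => by rw [pd_add _ (hdiff hf hy) ((hdiff hg hy).const_mul a), pd_const_mul]
  have hflux : ∀ i, pd d (fun y => ∑ j, D y i j * pd d (fun y => f y + a * g y) j y) i x
      = pd d (fun y => ∑ j, D y i j * pd d f j y) i x
        + a * pd d (fun y => ∑ j, D y i j * pd d g j y) i x := fun i => by
    have hnear : (fun y => ∑ j, D y i j * pd d (fun y => f y + a * g y) j y) =ᶠ[𝓝 x]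
        fun y => (∑ j, D y i j * pd d f j y) + a * ∑ j, D y i j * pd d g j y := by
      filter_upwards [hΩ.mem_nhds hx] with y hy
      simp only [hgrad _ y hy, Finset.mul_sum, ← Finset.sum_add_distrib]
      exact Finset.sum_congr rfl fun j _ => by ring
    rw [hnear.pd_eq, pd_add _ (hflux_diff hf i) ((hflux_diff hg i).const_mul a), pd_const_mul]
  simp only [Lop, hflux, hgrad _ x hx, mul_add, Finset.sum_add_distrib, mul_left_comm _ a,
    ← Finset.mul_sum]
  ring

theorem pd_exp_mul_coord (γ : ℝ) (i j : Fin d) (x : EuclideanSpace ℝ (Fin d)) :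
    pd d (fun y => Real.exp (γ * y i)) j x = if j = i then γ * Real.exp (γ * x i) else 0 := by
  have hcoord : HasFDerivAt (fun y : EuclideanSpace ℝ (Fin d) => γ * y i)
      (γ • (EuclideanSpace.proj i : EuclideanSpace ℝ (Fin d) →L[ℝ] ℝ)) x :=
    (EuclideanSpace.proj i : EuclideanSpace ℝ (Fin d) →L[ℝ] ℝ).hasFDerivAt.const_mul γ
  rw [pd, hcoord.exp.fderiv]
  by_cases h : j = i <;> simp [h, mul_comm]

theorem Lop_exp_mul_coord (γ : ℝ) (i : Fin d) {x : EuclideanSpace ℝ (Fin d)}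
    (hD : ∀ k, DifferentiableAt ℝ (fun y => D y k i) x) :
    Lop d D v α (fun y => Real.exp (γ * y i)) x = Real.exp (γ * x i) *
      (α x + γ * (v x i - ∑ k, pd d (fun y => D y k i) k x) - γ ^ 2 * D x i i) := by
  have hflux : ∀ k, (fun y => ∑ j, D y k j * pd d (fun y => Real.exp (γ * y i)) j y)
      = fun y => D y k i * (γ * Real.exp (γ * y i)) := fun k => by
    ext y
    simp [pd_exp_mul_coord]
  have hexp : DifferentiableAt ℝ
      (fun y : EuclideanSpace ℝ (Fin d) => γ * Real.exp (γ * y i)) x := by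
    fun_prop
  simp only [Lop, hflux]
  simp only [pd_mul _ (hD _) hexp, pd_const_mul, pd_exp_mul_coord]
  simp [Finset.sum_add_distrib, ← Finset.mul_sum]
  ring

theorem exists_Lop_exp_mul_coord_neg (i : Fin d) {lam M : ℝ} (hlam : 0 < lam)
    (hD : ∀ x ∈ Ω, ∀ k, DifferentiableAt ℝ (fun y => D y k i) x)
    (hDii : ∀ x ∈ Ω, lam ≤ D x i i) (hα : ∀ x ∈ Ω, α x ≤ M)
    (hdrift : ∀ x ∈ Ω, v x i - ∑ k, pd d (fun y => D y k i) k x ≤ M) :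
    ∃ γ : ℝ, ∀ x ∈ Ω, Lop d D v α (fun y => Real.exp (γ * y i)) x < 0 := by
  set γ := (2 * |M| + 1) / lam + 1
  have hγ : 1 ≤ γ := le_add_of_nonneg_left (by positivity)
  have hγlam : 2 * |M| + 1 ≤ γ * lam := by
    rw [add_mul, div_mul_cancel₀ _ hlam.ne', one_mul]
    linarith
  refine ⟨γ, fun x hx => ?_⟩
  rw [Lop_exp_mul_coord γ i (hD x hx)]
  refine mul_neg_of_pos_of_neg (Real.exp_pos _) ?_
  have hM := le_abs_self M
  have h₁ : γ * (v x i - ∑ k, pd d (fun y => D y k i) k x) ≤ γ * |M| := by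
    gcongr
    exact (hdrift x hx).trans hM
  have h₂ : γ * (γ * lam) ≤ γ ^ 2 * D x i i := by
    rw [← mul_assoc, ← sq]
    exact mul_le_mul_of_nonneg_left (hDii x hx) (sq_nonneg γ)
  have h₃ : γ * (2 * |M| + 1) ≤ γ * (γ * lam) := by gcongr
  have h₄ : |M| ≤ γ * |M| := le_mul_of_one_le_left (abs_nonneg M) hγ
  linarith [hα x hx]

theorem exists_le_frontier_of_Lop_neg (hΩ : IsOpen Ω) (hΩbd : Bornology.IsBounded Ω)
    (hD : ∀ x ∈ Ω, ∀ i j, DifferentiableAt ℝ (fun y => D y i j) x)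
    (hDpsd : ∀ x ∈ Ω, (D x).PosSemidef) (hα : ∀ x ∈ Ω, 0 ≤ α x)
    {w : EuclideanSpace ℝ (Fin d) → ℝ} (hw : ContDiffOn ℝ 2 w Ω)
    (hwc : ContinuousOn w (closure Ω)) (hLw : ∀ x ∈ Ω, Lop d D v α w x < 0)
    {y : EuclideanSpace ℝ (Fin d)} (hy : y ∈ closure Ω) (hwy : 0 ≤ w y) :
    ∃ z ∈ closure Ω \ Ω, w y ≤ w z := by
  obtain ⟨z, hz, hzmax⟩ := hΩbd.isCompact_closure.exists_isMaxOn ⟨y, hy⟩ hwc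
  refine ⟨z, ⟨hz, fun hzΩ => ?_⟩, hzmax hy⟩
  have hloc : IsLocalMax w z :=
    hzmax.isLocalMax (mem_of_superset (hΩ.mem_nhds hzΩ) subset_closure)
  exact (Lop_nonneg_of_isLocalMax hΩ hw hzΩ hloc (hwy.trans (hzmax hy)) (hD z hzΩ)
    (hDpsd z hzΩ) (hα z hzΩ)).not_gt (hLw z hzΩ)

theorem sSup_le_max_sSup_frontier_of_barrier (hΩ : IsOpen Ω) (hΩbd : Bornology.IsBounded Ω)
    (hD : ∀ x ∈ Ω, ∀ i j, DifferentiableAt ℝ (fun y => D y i j) x)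
    (hDpsd : ∀ x ∈ Ω, (D x).PosSemidef) (hα : ∀ x ∈ Ω, 0 ≤ α x)
    {φ : EuclideanSpace ℝ (Fin d) → ℝ} (hφ : ContDiffOn ℝ 2 φ Ω)
    (hφc : ContinuousOn φ (closure Ω)) (hφ₀ : ∀ x ∈ closure Ω, 0 ≤ φ x)
    (hLφ : ∀ x ∈ Ω, Lop d D v α φ x < 0)
    {c : EuclideanSpace ℝ (Fin d) → ℝ} (hc : ContDiffOn ℝ 2 c Ω)
    (hcc : ContinuousOn c (closure Ω)) (hLc : ∀ x ∈ Ω, Lop d D v α c x ≤ 0) :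
    sSup (c '' closure Ω) ≤ max 0 (sSup (c '' (closure Ω \ Ω))) := by
  have hK := hΩbd.isCompact_closure
  have hbdd : BddAbove (c '' (closure Ω \ Ω)) :=
    ((hK.diff hΩ).image_of_continuousOn (hcc.mono Set.sdiff_subset)).bddAbove
  obtain ⟨C, hC⟩ := hK.exists_bound_of_continuousOn hφc
  refine Real.sSup_le (Set.forall_mem_image.mpr fun y hy => ?_) (le_max_left _ _)
  rcases le_or_gt (c y) 0 with hcy | hcy
  · exact hcy.trans (le_max_left _ _)
  refine le_max_of_le_right (le_of_forall_pos_le_add fun δ hδ => ?_)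
  set ε := δ / (|C| + 1)
  have hε : 0 < ε := by positivity
  have hLw : ∀ x ∈ Ω, Lop d D v α (fun y => c y + ε * φ y) x < 0 := fun x hx => by
    rw [Lop_add_const_mul hΩ hc hφ ε hx (hD x hx)]
    nlinarith [hLc x hx, hLφ x hx]
  have hwy : c y ≤ c y + ε * φ y := le_add_of_nonneg_right (by positivity [hφ₀ y hy])
  obtain ⟨z, hz, hwz⟩ := exists_le_frontier_of_Lop_neg hΩ hΩbd hD hDpsd hα
    (hc.add (contDiffOn_const.mul hφ)) (hcc.add (continuousOn_const.mul hφc)) hLw hy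
    (hcy.le.trans hwy)
  have hεφ : ε * φ z ≤ δ := calc
    ε * φ z ≤ ε * (|C| + 1) := by
      gcongr
      linarith [le_abs_self (φ z), Real.norm_eq_abs (φ z) ▸ hC z hz.1, le_abs_self C]
    _ = δ := div_mul_cancel₀ _ (by positivity)
  linarith [le_csSup hbdd (Set.mem_image_of_mem c hz)]

end

theorem continuous_weak_maximum_principle_general
    (d : ℕ) (hd : 1 ≤ d)
    (Ω : Set (EuclideanSpace ℝ (Fin d)))
    (hΩopen : IsOpen Ω) (hΩbd : Bornology.IsBounded Ω)
    (D : EuclideanSpace ℝ (Fin d) → Matrix (Fin d) (Fin d) ℝ)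
    (hD : ∀ i j, ContDiff ℝ 1 (fun x => D x i j))
    (hDsymm : ∀ x, (D x).IsSymm)
    (lam0 Lam : ℝ) (hlam0 : 0 < lam0)
    (hellip : ∀ x ∈ Ω, ∀ ξ : Fin d → ℝ,
      lam0 * (∑ i, ξ i ^ 2) ≤ (∑ i, ∑ j, ξ i * D x i j * ξ j) ∧
      (∑ i, ∑ j, ξ i * D x i j * ξ j) ≤ Lam * (∑ i, ξ i ^ 2))
    (v : EuclideanSpace ℝ (Fin d) → EuclideanSpace ℝ (Fin d))
    (hvbd : ∃ M, ∀ x ∈ Ω, ‖v x‖ ≤ M)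
    (α : EuclideanSpace ℝ (Fin d) → ℝ)
    (hα : Continuous α) (hαnn : ∀ x ∈ Ω, 0 ≤ α x)
    (c : EuclideanSpace ℝ (Fin d) → ℝ)
    (hc : ContDiffOn ℝ 2 c Ω) (hccont : ContinuousOn c (closure Ω))
    (hLc : ∀ x ∈ Ω, Lop d D v α c x ≤ 0) :
    sSup (c '' closure Ω) ≤ max 0 (sSup (c '' (closure Ω \ Ω))) := by
  set i : Fin d := ⟨0, hd⟩
  have hK := hΩbd.isCompact_closure
  have hDdiff : ∀ x ∈ Ω, ∀ j k, DifferentiableAt ℝ (fun y => D y j k) x :=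
    fun x _ j k => (hD j k).differentiable one_ne_zero x
  have hDpsd : ∀ x ∈ Ω, (D x).PosSemidef := fun x hx =>
    Matrix.posSemidef_of_isSymm_of_quadratic_nonneg (hDsymm x) fun ξ =>
      (mul_nonneg hlam0.le (by positivity)).trans (hellip x hx ξ).1
  have hDii : ∀ x ∈ Ω, lam0 ≤ D x i i := fun x hx => by
    simpa [Pi.single_apply] using (hellip x hx (Pi.single i 1)).1
  obtain ⟨A, hA⟩ := hK.exists_bound_of_continuousOn
    (continuous_finsetSum Finset.univ fun k _ => (hD k i).continuous_pd k).continuousOn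
  obtain ⟨B, hB⟩ := hK.exists_bound_of_continuousOn hα.continuousOn
  obtain ⟨Mv, hMv⟩ := hvbd
  have hα_le : ∀ x ∈ Ω, α x ≤ B := fun x hx =>
    (le_abs_self _).trans (hB x (subset_closure hx))
  have hdrift : ∀ x ∈ Ω, v x i - ∑ k, pd d (fun y => D y k i) k x ≤ Mv + A := fun x hx => by
    have hvi := (PiLp.norm_apply_le (v x) i).trans (hMv x hx)
    have hdiv := hA x (subset_closure hx)
    rw [Real.norm_eq_abs] at hvi hdiv
    linarith [le_abs_self (v x i), neg_abs_le (∑ k, pd d (fun y => D y k i) k x)]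
  obtain ⟨γ, hγ⟩ := exists_Lop_exp_mul_coord_neg (M := max B (Mv + A)) i hlam0
    (fun x hx k => hDdiff x hx k i) hDii (fun x hx => (hα_le x hx).trans (le_max_left _ _))
    (fun x hx => (hdrift x hx).trans (le_max_right _ _))
  have hφ : ContDiff ℝ 2 fun y : EuclideanSpace ℝ (Fin d) => Real.exp (γ * y i) := by fun_prop
  exact sSup_le_max_sSup_frontier_of_barrier hΩopen hΩbd hDdiff hDpsd hαnn hφ.contDiffOn
    hφ.continuous.continuousOn (fun x _ => (Real.exp_pos _).le) hγ hc hccont hLc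

/-- Continuous weak maximum principle. -/
theorem continuous_weak_maximum_principle
    (d : ℕ) (hd : 1 ≤ d)
    (Ω : Set (EuclideanSpace ℝ (Fin d)))
    (hΩne : Ω.Nonempty) (hΩopen : IsOpen Ω) (hΩbd : Bornology.IsBounded Ω)
    (D : EuclideanSpace ℝ (Fin d) → Matrix (Fin d) (Fin d) ℝ)
    (hD : ∀ i j, ContDiff ℝ 1 (fun x => D x i j))
    (hDsymm : ∀ x, (D x).IsSymm)
    (lam0 Lam : ℝ) (hlam0 : 0 < lam0) (hlamLam : lam0 ≤ Lam)
    (hellip : ∀ x ∈ Ω, ∀ ξ : Fin d → ℝ,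
      lam0 * (∑ i, ξ i ^ 2) ≤ (∑ i, ∑ j, ξ i * D x i j * ξ j) ∧
      (∑ i, ∑ j, ξ i * D x i j * ξ j) ≤ Lam * (∑ i, ξ i ^ 2))
    (v : EuclideanSpace ℝ (Fin d) → EuclideanSpace ℝ (Fin d))
    (hv : ContinuousOn v Ω) (hvbd : ∃ M, ∀ x ∈ Ω, ‖v x‖ ≤ M)
    (α : EuclideanSpace ℝ (Fin d) → ℝ)
    (hα : Continuous α) (hαnn : ∀ x ∈ Ω, 0 ≤ α x)
    (c : EuclideanSpace ℝ (Fin d) → ℝ)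
    (hc : ContDiffOn ℝ 2 c Ω) (hccont : ContinuousOn c (closure Ω))
    (hLc : ∀ x ∈ Ω, Lop d D v α c x ≤ 0) :
    sSup (c '' closure Ω) ≤ max 0 (sSup (c '' (closure Ω \ Ω))) :=
  continuous_weak_maximum_principle_general d hd Ω hΩopen hΩbd D hD hDsymm lam0 Lam hlam0 hellip v
    hvbd α hα hαnn c hc hccont hLc
end
end

section
/- Necessary and sufficient conditions for the discrete weak maximum principle: The pair (K_ff, K_fp) possesses the discrete weak maximum principle — i.e., for every admissible triple (c_f, c_p, r) with r ⪯ 0 one has max[c] ≤ max(0, max[c_p]) — if and only if all three of the following hold: (a) K_ff⁻¹ ⪰ 0 (all entries non-negative); (b) −K_ff⁻¹ K_fp ⪰ 0 (all entries non-negative); (c) −K_ff⁻¹ K_fp 1 ⪯ 1. -/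
/-- Necessary and sufficient conditions on the stiffness matrices to satisfy
the discrete weak maximum principle. -/
theorem discrete_weak_maximum_principle_iff
    (nf np : ℕ) (hnf : 1 ≤ nf) (hnp : 1 ≤ np)
    (Kff : Matrix (Fin nf) (Fin nf) ℝ) (Kfp : Matrix (Fin nf) (Fin np) ℝ)
    (hKff : IsUnit Kff.det) :
    (∀ (cf : Fin nf → ℝ) (cp : Fin np → ℝ) (r : Fin nf → ℝ),
        Kff.mulVec cf + Kfp.mulVec cp = r → r ≤ 0 →
        max (⨆ i, cf i) (⨆ j, cp j) ≤ max 0 (⨆ j, cp j)) ↔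
    ((∀ i j, 0 ≤ Kff⁻¹ i j) ∧
     (∀ i j, 0 ≤ (-(Kff⁻¹ * Kfp)) i j) ∧
     (∀ i, (-(Kff⁻¹ * Kfp)).mulVec 1 i ≤ 1)) := by
  haveI : Nonempty (Fin nf) := ⟨⟨0, hnf⟩⟩
  haveI : Nonempty (Fin np) := ⟨⟨0, hnp⟩⟩
  have hAK : Kff⁻¹ * Kff = 1 := Matrix.nonsing_inv_mul _ hKff
  have hKA : Kff * Kff⁻¹ = 1 := Matrix.mul_nonsing_inv _ hKff
  constructor
  · intro H
    refine ⟨?_, ?_, ?_⟩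
    · intro i j
      have heq : Kff.mulVec (Kff⁻¹.mulVec (-Pi.single j 1)) + Kfp.mulVec 0
          = -Pi.single j 1 := by
        rw [Matrix.mulVec_mulVec, hKA, Matrix.one_mulVec, Matrix.mulVec_zero, add_zero]
      have hr : ((-Pi.single j 1 : Fin nf → ℝ)) ≤ 0 := by
        intro k
        simp only [Pi.neg_apply, Pi.zero_apply, Pi.single_apply, neg_nonpos]
        split <;> norm_num
      have := H _ _ _ heq hr
      have hz : (⨆ k, (0 : Fin np → ℝ) k) = 0 := by simp
      rw [hz] at this
      simp only [max_self] at this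
      have hle : Kff⁻¹.mulVec (-Pi.single j 1) i ≤ 0 :=
        le_trans (le_ciSup (Set.Finite.bddAbove (Set.finite_range _)) i)
          (le_trans (le_max_left _ _) this)
      have hval : Kff⁻¹.mulVec (-Pi.single j 1) i = -(Kff⁻¹ i j) := by
        simp [Matrix.mulVec, dotProduct, Pi.single_apply, mul_ite,
          Finset.sum_ite_eq']
      rw [hval] at hle
      linarith
    · intro i j
      have heq : Kff.mulVec ((-(Kff⁻¹ * Kfp)).mulVec (-Pi.single j 1))
          + Kfp.mulVec (-Pi.single j 1) = 0 := by
        rw [Matrix.mulVec_mulVec, Matrix.mul_neg, ← Matrix.mul_assoc, hKA,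
          Matrix.one_mul, Matrix.neg_mulVec]
        abel
      have hr : (0 : Fin nf → ℝ) ≤ 0 := le_refl _
      have := H _ _ _ heq hr
      have hcp : (⨆ k, (-Pi.single j 1 : Fin np → ℝ) k) ≤ 0 := by
        apply ciSup_le
        intro k
        simp only [Pi.neg_apply, Pi.single_apply, neg_nonpos]
        split <;> norm_num
      have hle : (-(Kff⁻¹ * Kfp)).mulVec (-Pi.single j 1) i ≤ 0 := by
        have h1 : (-(Kff⁻¹ * Kfp)).mulVec (-Pi.single j 1) i
            ≤ ⨆ k, (-(Kff⁻¹ * Kfp)).mulVec (-Pi.single j 1) k :=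
          le_ciSup (Set.Finite.bddAbove (Set.finite_range _)) i
        have h2 := le_trans (le_max_left _ _) this
        have h3 : max 0 (⨆ k, (-Pi.single j 1 : Fin np → ℝ) k) = 0 := max_eq_left hcp
        rw [h3] at h2
        exact le_trans h1 h2
      have hval : (-(Kff⁻¹ * Kfp)).mulVec (-Pi.single j 1) i
          = -((-(Kff⁻¹ * Kfp)) i j) := by
        simp [Matrix.mulVec, dotProduct, Pi.single_apply, mul_ite,
          Finset.sum_ite_eq']
      rw [hval] at hle
      linarith
    · intro i
      have heq : Kff.mulVec ((-(Kff⁻¹ * Kfp)).mulVec 1) + Kfp.mulVec 1 = 0 := by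
        rw [Matrix.mulVec_mulVec, Matrix.mul_neg, ← Matrix.mul_assoc, hKA,
          Matrix.one_mul, Matrix.neg_mulVec]
        abel
      have hr : (0 : Fin nf → ℝ) ≤ 0 := le_refl _
      have := H _ _ _ heq hr
      have hcp : (⨆ k, (1 : Fin np → ℝ) k) = 1 := by simp
      rw [hcp] at this
      have h3 : max (0:ℝ) 1 = 1 := by norm_num
      rw [h3] at this
      have h1 : (-(Kff⁻¹ * Kfp)).mulVec 1 i
          ≤ ⨆ k, (-(Kff⁻¹ * Kfp)).mulVec 1 k :=
        le_ciSup (Set.Finite.bddAbove (Set.finite_range _)) i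
      exact le_trans h1 (le_trans (le_max_left _ _) this)
  · rintro ⟨ha, hb, hc⟩ cf cp r heq hr
    have hcf : cf = Kff⁻¹.mulVec r + (-(Kff⁻¹ * Kfp)).mulVec cp := by
      have h1 : Kff.mulVec cf = r - Kfp.mulVec cp := by
        rw [← heq]; abel
      have h2 : Kff⁻¹.mulVec (Kff.mulVec cf) = cf := by
        rw [Matrix.mulVec_mulVec, hAK, Matrix.one_mulVec]
      rw [h1] at h2
      rw [← h2, Matrix.mulVec_sub, Matrix.mulVec_mulVec, Matrix.neg_mulVec,
        sub_eq_add_neg]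
    set M := max 0 (⨆ j, cp j) with hM
    have hM0 : (0:ℝ) ≤ M := le_max_left _ _
    have hcpM : ∀ j, cp j ≤ M := fun j =>
      le_trans (le_ciSup (Set.Finite.bddAbove (Set.finite_range cp)) j)
        (le_max_right _ _)
    have key : ∀ i, cf i ≤ M := by
      intro i
      have h1 : Kff⁻¹.mulVec r i ≤ 0 := by
        simp only [Matrix.mulVec, dotProduct]
        apply Finset.sum_nonpos
        intro k _
        exact mul_nonpos_of_nonneg_of_nonpos (ha i k) (hr k)
      have h2 : (-(Kff⁻¹ * Kfp)).mulVec cp i ≤ M := by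
        have e1 : (-(Kff⁻¹ * Kfp)).mulVec cp i = ∑ j, (-(Kff⁻¹ * Kfp)) i j * cp j := rfl
        have e2 : (-(Kff⁻¹ * Kfp)).mulVec 1 i = ∑ j, (-(Kff⁻¹ * Kfp)) i j := by
          simp [Matrix.mulVec, dotProduct]
        calc (-(Kff⁻¹ * Kfp)).mulVec cp i
            = ∑ j, (-(Kff⁻¹ * Kfp)) i j * cp j := e1
          _ ≤ ∑ j, (-(Kff⁻¹ * Kfp)) i j * M := by
              apply Finset.sum_le_sum
              intro j _
              exact mul_le_mul_of_nonneg_left (hcpM j) (hb i j)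
          _ = (∑ j, (-(Kff⁻¹ * Kfp)) i j) * M := by rw [Finset.sum_mul]
          _ ≤ 1 * M := by
              apply mul_le_mul_of_nonneg_right _ hM0
              rw [← e2]; exact hc i
          _ = M := one_mul M
      calc cf i = Kff⁻¹.mulVec r i + (-(Kff⁻¹ * Kfp)).mulVec cp i := by rw [hcf]; rfl
        _ ≤ 0 + M := add_le_add h1 h2
        _ = M := zero_add M
    exact max_le (ciSup_le key) (le_max_right _ _)
end

section
/- Necessary and sufficient conditions for the discrete strict weak maximum principle: The pair (K_ff, K_fp) possesses the discrete strict weak maximum principle — i.e., for every admissible triple (c_f, c_p, r) with r ⪯ 0 one has max[c] = max[c_p] — if and only if all three of the following hold: (a) K_ff⁻¹ ⪰ 0; (b) −K_ff⁻¹ K_fp ⪰ 0; (c) −K_ff⁻¹ K_fp 1 = 1. -/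
/-!
Solving the interior equations gives `c_f = K_ff⁻¹ r + B c_p` with `B = -K_ff⁻¹ K_fp`, where `r` and
`c_p` range independently. So the principle holds iff `K_ff⁻¹ r ⪯ 0` for every `r ⪯ 0` and
`(B c_p)_i ≤ max[c_p]` for every `c_p`. The first condition is the entrywise nonnegativity of
`K_ff⁻¹` (test with `r = -e_j`). The second says that every row of `B` is a probability vector, so
that `(B c_p)_i` is a convex combination of the entries of `c_p` (test with `c_p = ±1` and
`c_p = -e_j`).
-/

open Matrix

namespace Matrix

variable {ι κ : Type*} [Fintype κ]

section OrderedRing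

variable {R : Type*} [Ring R] [PartialOrder R] [IsOrderedRing R]

theorem mulVec_nonpos_of_nonneg_of_nonpos {A : Matrix ι κ R} (hA : ∀ i j, 0 ≤ A i j)
    {r : κ → R} (hr : r ≤ 0) : A *ᵥ r ≤ 0 :=
  fun i => Finset.sum_nonpos fun j _ => mul_nonpos_of_nonneg_of_nonpos (hA i j) (hr j)

theorem forall_mulVec_nonpos_iff {A : Matrix ι κ R} :
    (∀ r : κ → R, r ≤ 0 → A *ᵥ r ≤ 0) ↔ ∀ i j, 0 ≤ A i j := by
  classical
  refine ⟨fun h i j => ?_, fun hA r hr => mulVec_nonpos_of_nonneg_of_nonpos hA hr⟩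
  have hr : -Pi.single j 1 ≤ (0 : κ → R) := neg_nonpos.2 (Pi.single_nonneg.2 zero_le_one)
  simpa [mulVec_neg, mulVec_single] using h _ hr i

end OrderedRing

theorem mulVec_apply_le_iSup {B : Matrix ι κ ℝ} (hB : ∀ i j, 0 ≤ B i j) (hB1 : B *ᵥ 1 = 1)
    (v : κ → ℝ) (i : ι) : (B *ᵥ v) i ≤ ⨆ j, v j :=
  calc (B *ᵥ v) i ≤ (B *ᵥ (⨆ j, v j) • 1) i :=
        Finset.sum_le_sum fun j _ => by
          simpa using mul_le_mul_of_nonneg_left (Finite.le_ciSup v j) (hB i j)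
    _ = ⨆ j, v j := by simp [mulVec_smul, hB1]

theorem forall_mulVec_apply_le_iSup_iff [Nonempty κ] {B : Matrix ι κ ℝ} :
    (∀ v i, (B *ᵥ v) i ≤ ⨆ j, v j) ↔ (∀ i j, 0 ≤ B i j) ∧ B *ᵥ 1 = 1 := by
  classical
  refine ⟨fun h => ⟨fun i j => ?_, funext fun i => ?_⟩,
    fun ⟨hB, hB1⟩ => mulVec_apply_le_iSup hB hB1⟩
  · have hsingle : (0 : κ → ℝ) ≤ Pi.single j 1 := Pi.single_nonneg.2 zero_le_one
    have hsup : ⨆ k, (-Pi.single j 1 : κ → ℝ) k ≤ 0 := ciSup_le fun k => neg_nonpos.2 (hsingle k)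
    have := (h (-Pi.single j 1) i).trans hsup
    simpa [mulVec_neg, mulVec_single] using this
  · have hle := h 1 i
    have hge := h (-1) i
    simp only [Pi.one_apply, Pi.neg_apply, ciSup_const, mulVec_neg] at hle hge ⊢
    linarith

theorem mulVec_add_mulVec_eq_iff {R : Type*} [CommRing R] [Fintype ι] [DecidableEq ι]
    {K : Matrix ι ι R} (hK : IsUnit K.det) (L : Matrix ι κ R) (x : ι → R) (y : κ → R)
    (r : ι → R) : K *ᵥ x + L *ᵥ y = r ↔ x = K⁻¹ *ᵥ r + (-(K⁻¹ * L)) *ᵥ y := by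
  constructor
  · rintro rfl
    rw [mulVec_add, mulVec_mulVec, nonsing_inv_mul K hK, one_mulVec, neg_mulVec,
      mulVec_mulVec, add_neg_cancel_right]
  · rintro rfl
    rw [mulVec_add, mulVec_mulVec, mul_nonsing_inv K hK, one_mulVec, mulVec_mulVec, Matrix.mul_neg,
      ← Matrix.mul_assoc, mul_nonsing_inv K hK, Matrix.one_mul, neg_mulVec, neg_add_cancel_right]

theorem forall_mulVec_add_mulVec_apply_le_iSup_iff {μ : Type*} [Fintype μ] [Nonempty κ]
    {A : Matrix ι μ ℝ} {B : Matrix ι κ ℝ} :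
    (∀ r : μ → ℝ, r ≤ 0 → ∀ v i, (A *ᵥ r + B *ᵥ v) i ≤ ⨆ j, v j) ↔
      (∀ i j, 0 ≤ A i j) ∧ (∀ i j, 0 ≤ B i j) ∧ B *ᵥ 1 = 1 := by
  rw [← forall_mulVec_nonpos_iff, ← forall_mulVec_apply_le_iSup_iff]
  refine ⟨fun h => ⟨fun r hr i => ?_, fun v i => ?_⟩, fun ⟨hA, hB⟩ r hr v i => ?_⟩
  · simpa using h r hr 0 i
  · simpa using h 0 le_rfl v i
  · exact add_le_of_nonpos_of_le (hA r hr i) (hB v i)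

end Matrix

/-- Necessary and sufficient conditions on the stiffness matrices to satisfy
the discrete strict weak maximum principle. -/
theorem discrete_strict_weak_maximum_principle_iff
    (nf np : ℕ) (hnf : 1 ≤ nf) (hnp : 1 ≤ np)
    (Kff : Matrix (Fin nf) (Fin nf) ℝ) (Kfp : Matrix (Fin nf) (Fin np) ℝ)
    (hKff : IsUnit Kff.det) :
    (∀ (cf : Fin nf → ℝ) (cp : Fin np → ℝ) (r : Fin nf → ℝ),
        Kff.mulVec cf + Kfp.mulVec cp = r → r ≤ 0 →
        max (⨆ i, cf i) (⨆ j, cp j) = (⨆ j, cp j)) ↔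
    ((∀ i j, 0 ≤ Kff⁻¹ i j) ∧
     (∀ i j, 0 ≤ (-(Kff⁻¹ * Kfp)) i j) ∧
     (∀ i, (-(Kff⁻¹ * Kfp)).mulVec 1 i = 1)) := by
  have : Nonempty (Fin nf) := ⟨⟨0, hnf⟩⟩
  have : Nonempty (Fin np) := ⟨⟨0, hnp⟩⟩
  have hmax (cf : Fin nf → ℝ) (cp : Fin np → ℝ) :
      max (⨆ i, cf i) (⨆ j, cp j) = ⨆ j, cp j ↔ ∀ i, cf i ≤ ⨆ j, cp j :=
    max_eq_right_iff.trans (ciSup_le_iff (Finite.bddAbove_range cf))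
  have hrow : (∀ i, ((-(Kff⁻¹ * Kfp)) *ᵥ 1) i = 1) ↔ (-(Kff⁻¹ * Kfp)) *ᵥ 1 = 1 :=
    funext_iff.symm
  rw [hrow, ← forall_mulVec_add_mulVec_apply_le_iSup_iff]
  constructor
  · intro h r hr cp
    exact (hmax _ cp).1 (h _ cp r ((mulVec_add_mulVec_eq_iff hKff Kfp _ cp r).2 rfl) hr)
  · intro h cf cp r hadm hr
    rw [(mulVec_add_mulVec_eq_iff hKff Kfp cf cp r).1 hadm, hmax]
    exact h r hr cp
end

section
/- Necessary and sufficient conditions for the discrete strong maximum principle: The pair (K_ff, K_fp) possesses the discrete strong maximum principle — i.e., it possesses the discrete weak maximum principle (for every admissible (c_f, c_p, r) with r ⪯ 0, max[c] ≤ max(0, max[c_p])) and, in addition, for every admissible (c_f, c_p, r) with r ⪯ 0 such that max[c] = max[c_f] = m with m ≥ 0, every component of c equals m (c = m·1) — if and only if all three of the following hold: (a) K_ff⁻¹ ≻ 0 (all entries strictly positive); (b) −K_ff⁻¹ K_fp ≻ 0 (all entries strictly positive); (c) either −K_ff⁻¹ K_fp 1 ≺ 1 or −K_ff⁻¹ K_fp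 1 = 1. -/
open Matrix

private lemma dsmp_rep {nf np : ℕ} (Kff : Matrix (Fin nf) (Fin nf) ℝ)
    (Kfp : Matrix (Fin nf) (Fin np) ℝ) (hKff : IsUnit Kff.det)
    (cf : Fin nf → ℝ) (cp : Fin np → ℝ) (r : Fin nf → ℝ)
    (h : Kff.mulVec cf + Kfp.mulVec cp = r) :
    cf = Kff⁻¹.mulVec r + (-(Kff⁻¹ * Kfp)).mulVec cp := by
  have h1 : Kff⁻¹.mulVec (Kff.mulVec cf + Kfp.mulVec cp) = Kff⁻¹.mulVec r := by rw [h]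
  rw [Matrix.mulVec_add, Matrix.mulVec_mulVec, Matrix.mulVec_mulVec,
    Matrix.nonsing_inv_mul Kff hKff, Matrix.one_mulVec] at h1
  rw [Matrix.neg_mulVec, ← sub_eq_add_neg]
  exact eq_sub_of_add_eq h1

private lemma dsmp_adm {nf np : ℕ} (Kff : Matrix (Fin nf) (Fin nf) ℝ)
    (Kfp : Matrix (Fin nf) (Fin np) ℝ) (hKff : IsUnit Kff.det)
    (cp : Fin np → ℝ) (r : Fin nf → ℝ) :
    Kff.mulVec (Kff⁻¹.mulVec r + (-(Kff⁻¹ * Kfp)).mulVec cp) + Kfp.mulVec cp = r := by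
  rw [Matrix.mulVec_add, Matrix.mulVec_mulVec, Matrix.mulVec_mulVec,
    Matrix.mul_nonsing_inv Kff hKff, Matrix.one_mulVec, Matrix.mul_neg,
    ← Matrix.mul_assoc, Matrix.mul_nonsing_inv Kff hKff, Matrix.one_mul,
    Matrix.neg_mulVec]
  abel

/-- Necessary and sufficient conditions on the stiffness matrices to satisfy
the discrete strong maximum principle. -/
theorem discrete_strong_maximum_principle_iff
    (nf np : ℕ) (hnf : 1 ≤ nf) (hnp : 1 ≤ np)
    (Kff : Matrix (Fin nf) (Fin nf) ℝ) (Kfp : Matrix (Fin nf) (Fin np) ℝ)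
    (hKff : IsUnit Kff.det) :
    ((∀ (cf : Fin nf → ℝ) (cp : Fin np → ℝ) (r : Fin nf → ℝ),
        Kff.mulVec cf + Kfp.mulVec cp = r → r ≤ 0 →
        max (⨆ i, cf i) (⨆ j, cp j) ≤ max 0 (⨆ j, cp j)) ∧
     (∀ (cf : Fin nf → ℝ) (cp : Fin np → ℝ) (r : Fin nf → ℝ) (m : ℝ),
        Kff.mulVec cf + Kfp.mulVec cp = r → r ≤ 0 →
        max (⨆ i, cf i) (⨆ j, cp j) = m → (⨆ i, cf i) = m → 0 ≤ m →
        (∀ i, cf i = m) ∧ (∀ j, cp j = m))) ↔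
    ((∀ i j, 0 < Kff⁻¹ i j) ∧
     (∀ i j, 0 < (-(Kff⁻¹ * Kfp)) i j) ∧
     ((∀ i, (-(Kff⁻¹ * Kfp)).mulVec 1 i < 1) ∨
      (∀ i, (-(Kff⁻¹ * Kfp)).mulVec 1 i = 1))) := by
  haveI : Nonempty (Fin nf) := ⟨⟨0, hnf⟩⟩
  haveI : Nonempty (Fin np) := ⟨⟨0, hnp⟩⟩
  set B := -(Kff⁻¹ * Kfp) with hBdef
  constructor
  · rintro ⟨hw, hs⟩
    -- (a) nonnegativity of Kff⁻¹
    have hA0 : ∀ i j, 0 ≤ Kff⁻¹ i j := by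
      intro i j
      set r : Fin nf → ℝ := -(Pi.single j 1) with hrdef
      set cf : Fin nf → ℝ := Kff⁻¹.mulVec r + B.mulVec (0 : Fin np → ℝ) with hcfdef
      have hadm := dsmp_adm Kff Kfp hKff (0 : Fin np → ℝ) r
      have hr0 : r ≤ 0 := by
        intro k
        simp [hrdef, Pi.single_apply]
        split <;> norm_num
      have h1 := hw cf 0 r hadm hr0
      have hsup0 : (⨆ j : Fin np, (0 : Fin np → ℝ) j) = (0 : ℝ) := by simp
      rw [hsup0, max_self] at h1
      have hcfi : cf i = -(Kff⁻¹ i j) := by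
        simp [hcfdef, hrdef, Matrix.mulVec_neg]
      have h2 : cf i ≤ 0 :=
        le_trans (le_ciSup (Finite.bddAbove_range cf) i) (le_trans (le_max_left _ _) h1)
      rw [hcfi] at h2
      linarith
    -- (a) strict positivity
    have hA : ∀ i j, 0 < Kff⁻¹ i j := by
      intro i j
      rcases lt_or_eq_of_le (hA0 i j) with h | h
      · exact h
      exfalso
      set r : Fin nf → ℝ := -(Pi.single j 1) with hrdef
      set cf : Fin nf → ℝ := Kff⁻¹.mulVec r + B.mulVec (0 : Fin np → ℝ) with hcfdef
      have hadm := dsmp_adm Kff Kfp hKff (0 : Fin np → ℝ) r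
      have hr0 : r ≤ 0 := by
        intro k
        simp [hrdef, Pi.single_apply]
        split <;> norm_num
      have hcfe : ∀ k, cf k = -(Kff⁻¹ k j) := by
        intro k; simp [hcfdef, hrdef, Matrix.mulVec_neg]
      have hcfle : ∀ k, cf k ≤ 0 := fun k => by rw [hcfe k]; linarith [hA0 k j]
      have hcfi : cf i = 0 := by rw [hcfe i, ← h, neg_zero]
      have hsupcf : (⨆ k, cf k) = 0 :=
        le_antisymm (ciSup_le hcfle) (hcfi ▸ le_ciSup (Finite.bddAbove_range cf) i)
      have hsup0 : (⨆ j : Fin np, (0 : Fin np → ℝ) j) = (0 : ℝ) := by simp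
      have hmax : max (⨆ k, cf k) (⨆ j : Fin np, (0 : Fin np → ℝ) j) = 0 := by
        rw [hsupcf, hsup0, max_self]
      obtain ⟨hcf_all, _⟩ := hs cf 0 r 0 hadm hr0 hmax hsupcf le_rfl
      have hAz : ∀ k, Kff⁻¹ k j = 0 := by
        intro k
        have := hcf_all k
        rw [hcfe k] at this
        linarith
      have hone : (Kff * Kff⁻¹) j j = 1 := by
        rw [Matrix.mul_nonsing_inv Kff hKff, Matrix.one_apply_eq]
      have hzero : (Kff * Kff⁻¹) j j = 0 := by
        rw [Matrix.mul_apply]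
        exact Finset.sum_eq_zero fun k _ => by rw [hAz k, mul_zero]
      rw [hzero] at hone
      exact one_ne_zero hone.symm
    refine ⟨hA, ?_, ?_⟩
    -- (b)
    · have hB0 : ∀ i j, 0 ≤ B i j := by
        intro i j
        set cp : Fin np → ℝ := -(Pi.single j 1) with hcpdef
        set cf : Fin nf → ℝ := Kff⁻¹.mulVec 0 + B.mulVec cp with hcfdef
        have hadm := dsmp_adm Kff Kfp hKff cp (0 : Fin nf → ℝ)
        have h1 := hw cf cp 0 hadm le_rfl
        have hcple : ∀ j', cp j' ≤ 0 := by
          intro k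
          simp [hcpdef, Pi.single_apply]
          split <;> norm_num
        have hsupcp : (⨆ j', cp j') ≤ 0 := ciSup_le hcple
        have hmaxcp : max 0 (⨆ j', cp j') = 0 := max_eq_left hsupcp
        rw [hmaxcp] at h1
        have hcfi : cf i = -(B i j) := by
          simp [hcfdef, hcpdef, Matrix.mulVec_neg]
        have h2 : cf i ≤ 0 :=
          le_trans (le_ciSup (Finite.bddAbove_range cf) i) (le_trans (le_max_left _ _) h1)
        rw [hcfi] at h2
        linarith
      intro i j
      rcases lt_or_eq_of_le (hB0 i j) with h | h
      · exact h
      exfalso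
      set cp : Fin np → ℝ := -(Pi.single j 1) with hcpdef
      set cf : Fin nf → ℝ := Kff⁻¹.mulVec 0 + B.mulVec cp with hcfdef
      have hadm := dsmp_adm Kff Kfp hKff cp (0 : Fin nf → ℝ)
      have hcfe : ∀ k, cf k = -(B k j) := by
        intro k; simp [hcfdef, hcpdef, Matrix.mulVec_neg]
      have hcfle : ∀ k, cf k ≤ 0 := fun k => by rw [hcfe k]; linarith [hB0 k j]
      have hcfi : cf i = 0 := by rw [hcfe i, ← h, neg_zero]
      have hsupcf : (⨆ k, cf k) = 0 :=
        le_antisymm (ciSup_le hcfle) (hcfi ▸ le_ciSup (Finite.bddAbove_range cf) i)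
      have hcple : ∀ j', cp j' ≤ 0 := by
        intro k
        simp [hcpdef, Pi.single_apply]
        split <;> norm_num
      have hsupcp : (⨆ j', cp j') ≤ 0 := ciSup_le hcple
      have hmax : max (⨆ k, cf k) (⨆ j', cp j') = 0 := by
        rw [hsupcf]; exact max_eq_left hsupcp
      obtain ⟨_, hcp_all⟩ := hs cf cp 0 0 hadm le_rfl hmax hsupcf le_rfl
      have := hcp_all j
      simp [hcpdef] at this
    -- (c)
    · set cf : Fin nf → ℝ := Kff⁻¹.mulVec 0 + B.mulVec 1 with hcfdef
      have hadm := dsmp_adm Kff Kfp hKff (1 : Fin np → ℝ) (0 : Fin nf → ℝ)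
      have hcfe : ∀ k, cf k = B.mulVec 1 k := by
        intro k; simp [hcfdef]
      have hsup1 : (⨆ j : Fin np, (1 : Fin np → ℝ) j) = (1 : ℝ) := by
        simp [ciSup_const]
      have h1 := hw cf 1 0 hadm le_rfl
      rw [hsup1] at h1
      have hmax01 : max (0:ℝ) 1 = 1 := by norm_num
      rw [hmax01] at h1
      have hle : ∀ k, B.mulVec 1 k ≤ 1 := by
        intro k
        rw [← hcfe k]
        exact le_trans (le_ciSup (Finite.bddAbove_range cf) k) (le_trans (le_max_left _ _) h1)
      by_cases hall : ∀ k, B.mulVec 1 k < 1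
      · exact Or.inl hall
      push_neg at hall
      obtain ⟨i₀, hi₀⟩ := hall
      have hi₀e : B.mulVec 1 i₀ = 1 := le_antisymm (hle i₀) hi₀
      have hsupcf : (⨆ k, cf k) = 1 := by
        refine le_antisymm (ciSup_le fun k => by rw [hcfe k]; exact hle k) ?_
        have := le_ciSup (Finite.bddAbove_range cf) i₀
        rw [hcfe i₀, hi₀e] at this
        exact this
      have hmax : max (⨆ k, cf k) (⨆ j : Fin np, (1 : Fin np → ℝ) j) = 1 := by
        rw [hsupcf, hsup1, max_self]
      obtain ⟨hcf_all, _⟩ := hs cf 1 0 1 hadm le_rfl hmax hsupcf zero_le_one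
      refine Or.inr fun k => ?_
      rw [← hcfe k]
      exact hcf_all k
  · rintro ⟨hA, hB, hc⟩
    have hs1 : ∀ i, B.mulVec 1 i ≤ 1 := by
      rcases hc with h | h
      · exact fun i => (h i).le
      · exact fun i => (h i).le
    have hAr : ∀ (r : Fin nf → ℝ), r ≤ 0 → ∀ i, Kff⁻¹.mulVec r i ≤ 0 := by
      intro r hr i
      have he : Kff⁻¹.mulVec r i = ∑ k, Kff⁻¹ i k * r k := by
        simp [Matrix.mulVec, dotProduct]
      rw [he]
      exact Finset.sum_nonpos fun k _ =>
        mul_nonpos_of_nonneg_of_nonpos (hA i k).le (hr k)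
    have hBe : ∀ (cp : Fin np → ℝ) (i : Fin nf),
        B.mulVec cp i = ∑ j, B i j * cp j := by
      intro cp i; simp [Matrix.mulVec, dotProduct]
    have hBbd : ∀ (cp : Fin np → ℝ) (t : ℝ), (∀ j, cp j ≤ t) →
        ∀ i, B.mulVec cp i ≤ (B.mulVec 1 i) * t := by
      intro cp t ht i
      rw [hBe cp i]
      have h1 : B.mulVec 1 i = ∑ j, B i j := by
        simp [Matrix.mulVec, dotProduct]
      rw [h1, Finset.sum_mul]
      exact Finset.sum_le_sum fun j _ => mul_le_mul_of_nonneg_left (ht j) (hB i j).le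
    constructor
    -- weak maximum principle
    · intro cf cp r hadm hr
      have hrep := dsmp_rep Kff Kfp hKff cf cp r hadm
      refine max_le (ciSup_le fun i => ?_) (le_max_right _ _)
      set M0 := max (0:ℝ) (⨆ j, cp j) with hM0
      have h0 : (0:ℝ) ≤ M0 := le_max_left _ _
      have hcpM : ∀ j, cp j ≤ M0 :=
        fun j => le_trans (le_ciSup (Finite.bddAbove_range cp) j) (le_max_right _ _)
      have h1 : cf i = Kff⁻¹.mulVec r i + B.mulVec cp i := by rw [hrep]; rfl
      have h2 := hAr r hr i
      have h3 := hBbd cp M0 hcpM i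
      have h4 : (B.mulVec 1 i) * M0 ≤ 1 * M0 := mul_le_mul_of_nonneg_right (hs1 i) h0
      rw [one_mul] at h4
      linarith
    -- strong maximum principle
    · intro cf cp r m hadm hr hmax hsupcf hm
      have hrep := dsmp_rep Kff Kfp hKff cf cp r hadm
      have hdec : ∀ i, cf i = Kff⁻¹.mulVec r i + B.mulVec cp i := by
        intro i; rw [hrep]; rfl
      have hcpm : ∀ j, cp j ≤ m := by
        intro j
        calc cp j ≤ ⨆ j', cp j' := le_ciSup (Finite.bddAbove_range cp) j
          _ ≤ max (⨆ i, cf i) (⨆ j', cp j') := le_max_right _ _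
          _ = m := hmax
      obtain ⟨i₀, hi₀⟩ := Finite.exists_max cf
      have hcfi₀ : cf i₀ = m := by
        refine le_antisymm ?_ ?_
        · rw [← hsupcf]; exact le_ciSup (Finite.bddAbove_range cf) i₀
        · rw [← hsupcf]; exact ciSup_le hi₀
      have hP : Kff⁻¹.mulVec r i₀ ≤ 0 := hAr r hr i₀
      have hQ : B.mulVec cp i₀ ≤ (B.mulVec 1 i₀) * m := hBbd cp m hcpm i₀
      have hsm : (B.mulVec 1 i₀) * m ≤ m := by nlinarith [hs1 i₀, hm]
      have hm_eq : m = Kff⁻¹.mulVec r i₀ + B.mulVec cp i₀ := by rw [← hcfi₀, hdec]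
      have hP0 : Kff⁻¹.mulVec r i₀ = 0 := by linarith
      have hQm : B.mulVec cp i₀ = m := by linarith
      have hsm_eq : (B.mulVec 1 i₀) * m = m := le_antisymm hsm (by linarith)
      -- r = 0
      have hr0 : r = 0 := by
        have hPe : Kff⁻¹.mulVec r i₀ = ∑ k, Kff⁻¹ i₀ k * r k := by
          simp [Matrix.mulVec, dotProduct]
        rw [hPe] at hP0
        have := (Finset.sum_eq_zero_iff_of_nonpos
          (fun k _ => mul_nonpos_of_nonneg_of_nonpos (hA i₀ k).le (hr k))).mp hP0
        funext k
        have hk := this k (Finset.mem_univ k)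
        rcases mul_eq_zero.mp hk with h | h
        · exact absurd h (ne_of_gt (hA i₀ k))
        · exact h
      -- cp = m 1
      have hcp_all : ∀ j, cp j = m := by
        have h1 : B.mulVec 1 i₀ = ∑ j, B i₀ j := by
          simp [Matrix.mulVec, dotProduct]
        have heq : ∑ j, B i₀ j * cp j = ∑ j, B i₀ j * m := by
          rw [← hBe cp i₀, hQm, ← Finset.sum_mul, ← h1, hsm_eq]
        have := (Finset.sum_eq_sum_iff_of_le
          (fun j _ => mul_le_mul_of_nonneg_left (hcpm j) (hB i₀ j).le)).mp heq
        intro j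
        exact mul_left_cancel₀ (ne_of_gt (hB i₀ j)) (this j (Finset.mem_univ j))
      have hcf_all : ∀ i, cf i = (B.mulVec 1 i) * m := by
        intro i
        rw [hdec i, hr0, Matrix.mulVec_zero]
        have : B.mulVec cp i = ∑ j, B i j * m := by
          rw [hBe cp i]
          exact Finset.sum_congr rfl fun j _ => by rw [hcp_all j]
        rw [Pi.zero_apply, zero_add, this]
        have h1 : B.mulVec 1 i = ∑ j, B i j := by
          simp [Matrix.mulVec, dotProduct]
        rw [h1, Finset.sum_mul]
      refine ⟨?_, hcp_all⟩
      rcases hc with hlt | heq1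
      · have hm0 : m = 0 := by nlinarith [hlt i₀, hsm_eq, hm]
        intro i
        rw [hcf_all i, hm0, mul_zero]
      · intro i
        rw [hcf_all i, heq1 i, one_mul]
end

section
/- Necessary and sufficient conditions for the discrete strict strong maximum principle: The pair (K_ff, K_fp) possesses the discrete strict strong maximum principle — i.e., it possesses the discrete strict weak maximum principle (for every admissible (c_f, c_p, r) with r ⪯ 0, max[c] = max[c_p]) and, in addition, for every admissible (c_f, c_p, r) with r ⪯ 0 such that max[c] = max[c_f] = m, every component of c equals m (c = m·1) — if and only if all three of the following hold: (a) K_ff⁻¹ ≻ 0 (all entries strictly positive); (b) −K_ff⁻¹ K_fp ≻ 0 (all entries strictly positive); (c) −K_ff⁻¹ K_fp 1 = 1. -/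
section Aux

variable {nf np : ℕ}

/-- Admissibility is equivalent to the explicit formula for `cf`. -/
lemma dssmp_adm_iff {Kff : Matrix (Fin nf) (Fin nf) ℝ} {Kfp : Matrix (Fin nf) (Fin np) ℝ}
    (hKff : IsUnit Kff.det) (cf : Fin nf → ℝ) (cp : Fin np → ℝ)
    (r : Fin nf → ℝ) :
    Kff.mulVec cf + Kfp.mulVec cp = r ↔
      cf = (Kff⁻¹).mulVec r + (-(Kff⁻¹ * Kfp)).mulVec cp := by
  constructor
  · intro h
    have h2 := congrArg (Kff⁻¹.mulVec) h
    rw [Matrix.mulVec_add, Matrix.mulVec_mulVec, Matrix.mulVec_mulVec,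
      Matrix.nonsing_inv_mul Kff hKff, Matrix.one_mulVec] at h2
    have : cf = Kff⁻¹.mulVec r - (Kff⁻¹ * Kfp).mulVec cp := by
      rw [← h2]; abel
    rw [this, Matrix.neg_mulVec]; abel
  · intro h
    subst h
    rw [Matrix.mulVec_add, Matrix.mulVec_mulVec, Matrix.mulVec_mulVec,
      Matrix.mul_nonsing_inv Kff hKff, Matrix.one_mulVec, Matrix.mul_neg,
      ← Matrix.mul_assoc, Matrix.mul_nonsing_inv Kff hKff, Matrix.one_mul,
      Matrix.neg_mulVec]
    abel

lemma dssmp_mulVec_negSingle {a b : ℕ} (M : Matrix (Fin a) (Fin b) ℝ) (k : Fin b) (i : Fin a) :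
    M.mulVec (fun x => if x = k then (-1:ℝ) else 0) i = -M i k := by
  simp [Matrix.mulVec, dotProduct, mul_ite, Finset.sum_ite_eq']

lemma dssmp_bdd {n : ℕ} (f : Fin n → ℝ) : BddAbove (Set.range f) :=
  Set.Finite.bddAbove (Set.finite_range f)

end Aux

/-- Necessary and sufficient conditions on the stiffness matrices to satisfy
the discrete strict strong maximum principle. -/
theorem discrete_strict_strong_maximum_principle_iff
    (nf np : ℕ) (hnf : 1 ≤ nf) (hnp : 1 ≤ np)
    (Kff : Matrix (Fin nf) (Fin nf) ℝ) (Kfp : Matrix (Fin nf) (Fin np) ℝ)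
    (hKff : IsUnit Kff.det) :
    ((∀ (cf : Fin nf → ℝ) (cp : Fin np → ℝ) (r : Fin nf → ℝ),
        Kff.mulVec cf + Kfp.mulVec cp = r → r ≤ 0 →
        max (⨆ i, cf i) (⨆ j, cp j) = (⨆ j, cp j)) ∧
     (∀ (cf : Fin nf → ℝ) (cp : Fin np → ℝ) (r : Fin nf → ℝ) (m : ℝ),
        Kff.mulVec cf + Kfp.mulVec cp = r → r ≤ 0 →
        max (⨆ i, cf i) (⨆ j, cp j) = m → (⨆ i, cf i) = m →
        (∀ i, cf i = m) ∧ (∀ j, cp j = m))) ↔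
    ((∀ i j, 0 < Kff⁻¹ i j) ∧
     (∀ i j, 0 < (-(Kff⁻¹ * Kfp)) i j) ∧
     (∀ i, (-(Kff⁻¹ * Kfp)).mulVec 1 i = 1)) := by
  have hnef : Nonempty (Fin nf) := ⟨⟨0, hnf⟩⟩
  have hnep : Nonempty (Fin np) := ⟨⟨0, hnp⟩⟩
  have adm : ∀ (cp : Fin np → ℝ) (r : Fin nf → ℝ),
      Kff.mulVec ((Kff⁻¹).mulVec r + (-(Kff⁻¹ * Kfp)).mulVec cp) + Kfp.mulVec cp = r :=
    fun cp r => (dssmp_adm_iff hKff _ cp r).mpr rfl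
  constructor
  · rintro ⟨hweak, hstrong⟩
    -- part (c) first
    have hc : ∀ i, (-(Kff⁻¹ * Kfp)).mulVec 1 i = 1 := by
      intro i
      have h1 := hweak _ 1 0 (adm 1 0) le_rfl
      have h2 := hweak _ (-1) 0 (adm (-1) 0) le_rfl
      have hs1 : (⨆ j : Fin np, (1 : Fin np → ℝ) j) = 1 := by
        simp [ciSup_const]
      have hs2 : (⨆ j : Fin np, (-1 : Fin np → ℝ) j) = -1 := by
        simp [ciSup_const]
      have hle1 : ((Kff⁻¹).mulVec 0 + (-(Kff⁻¹ * Kfp)).mulVec 1) i ≤ 1 :=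
        le_trans (le_ciSup (dssmp_bdd _) i) (le_trans (max_eq_right_iff.mp h1) hs1.le)
      have hle2 : ((Kff⁻¹).mulVec 0 + (-(Kff⁻¹ * Kfp)).mulVec (-1)) i ≤ -1 :=
        le_trans (le_ciSup (dssmp_bdd _) i) (le_trans (max_eq_right_iff.mp h2) hs2.le)
      rw [Matrix.mulVec_zero] at hle1 hle2
      rw [Matrix.mulVec_neg] at hle2
      simp only [Pi.add_apply, Pi.zero_apply, zero_add, Pi.neg_apply] at hle1 hle2
      linarith
    -- part (a)
    have hA0 : ∀ i k, 0 ≤ Kff⁻¹ i k := by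
      intro i k
      set r : Fin nf → ℝ := fun x => if x = k then (-1:ℝ) else 0 with hrdef
      have hr : r ≤ 0 := by
        intro x
        by_cases h : x = k <;> simp [hrdef, h]
      have h1 := hweak _ 0 r (adm 0 r) hr
      have hs0 : (⨆ j : Fin np, (0 : Fin np → ℝ) j) = 0 := by simp [ciSup_const]
      have hle : ((Kff⁻¹).mulVec r + (-(Kff⁻¹ * Kfp)).mulVec 0) i ≤ 0 :=
        le_trans (le_ciSup (dssmp_bdd _) i) (le_trans (max_eq_right_iff.mp h1) hs0.le)
      rw [Matrix.mulVec_zero] at hle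
      simp only [Pi.add_apply, Pi.zero_apply, add_zero] at hle
      rw [dssmp_mulVec_negSingle] at hle
      linarith
    have ha : ∀ i k, 0 < Kff⁻¹ i k := by
      intro i k
      rcases lt_or_eq_of_le (hA0 i k) with h | h
      · exact h
      exfalso
      set r : Fin nf → ℝ := fun x => if x = k then (-1:ℝ) else 0 with hrdef
      have hr : r ≤ 0 := by
        intro x
        by_cases h : x = k <;> simp [hrdef, h]
      set cf : Fin nf → ℝ := (Kff⁻¹).mulVec r + (-(Kff⁻¹ * Kfp)).mulVec 0 with hcfdef
      have hcf : ∀ x, cf x = -(Kff⁻¹ x k) := by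
        intro x
        rw [hcfdef]
        simp only [Matrix.mulVec_zero, Pi.add_apply, Pi.zero_apply, add_zero]
        rw [dssmp_mulVec_negSingle]
      have hcfi : cf i = 0 := by rw [hcf i, ← h, neg_zero]
      have hsupcf : (⨆ x, cf x) = 0 := by
        refine le_antisymm (ciSup_le fun x => ?_) (hcfi ▸ le_ciSup (dssmp_bdd cf) i)
        rw [hcf x]
        linarith [hA0 x k]
      have hs0 : (⨆ j : Fin np, (0 : Fin np → ℝ) j) = 0 := by simp [ciSup_const]
      have h2 := hstrong cf 0 r 0 (adm 0 r) hr (by rw [hsupcf, hs0, max_self]) hsupcf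
      have hcol : ∀ x, Kff⁻¹ x k = 0 := by
        intro x
        have := h2.1 x
        rw [hcf x] at this
        linarith
      have hKA : Kff * Kff⁻¹ = 1 := Matrix.mul_nonsing_inv Kff hKff
      have : (1 : Matrix (Fin nf) (Fin nf) ℝ) k k = 0 := by
        rw [← hKA, Matrix.mul_apply]
        exact Finset.sum_eq_zero fun x _ => by rw [hcol x, mul_zero]
      simp at this
    -- part (b)
    have hB0 : ∀ i j, 0 ≤ (-(Kff⁻¹ * Kfp)) i j := by
      intro i j
      set cp : Fin np → ℝ := fun x => if x = j then (-1:ℝ) else 0 with hcpdef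
      have h1 := hweak _ cp 0 (adm cp 0) le_rfl
      have hcple : (⨆ x, cp x) ≤ 0 := by
        refine ciSup_le fun x => ?_
        by_cases h : x = j <;> simp [hcpdef, h]
      have hle : ((Kff⁻¹).mulVec 0 + (-(Kff⁻¹ * Kfp)).mulVec cp) i ≤ 0 :=
        le_trans (le_ciSup (dssmp_bdd _) i) (le_trans (max_eq_right_iff.mp h1) hcple)
      rw [Matrix.mulVec_zero] at hle
      simp only [Pi.add_apply, Pi.zero_apply, zero_add] at hle
      rw [dssmp_mulVec_negSingle] at hle
      linarith
    refine ⟨ha, ?_, hc⟩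
    intro i j
    by_cases hsub : ∀ j', j' = j
    · have hone : (-(Kff⁻¹ * Kfp)).mulVec 1 i = (-(Kff⁻¹ * Kfp)) i j := by
        simp only [Matrix.mulVec, dotProduct, Pi.one_apply, mul_one]
        exact Finset.sum_eq_single j (fun b _ hb => absurd (hsub b) hb)
          (fun h => absurd (Finset.mem_univ j) h)
      rw [← hone, hc i]
      exact one_pos
    · push_neg at hsub
      obtain ⟨j', hj'⟩ := hsub
      rcases lt_or_eq_of_le (hB0 i j) with h | h
      · exact h
      exfalso
      set cp : Fin np → ℝ := fun x => if x = j then (-1:ℝ) else 0 with hcpdef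
      set cf : Fin nf → ℝ := (Kff⁻¹).mulVec 0 + (-(Kff⁻¹ * Kfp)).mulVec cp with hcfdef
      have hcf : ∀ x, cf x = -((-(Kff⁻¹ * Kfp)) x j) := by
        intro x
        rw [hcfdef]
        simp only [Matrix.mulVec_zero, Pi.add_apply, Pi.zero_apply, zero_add]
        rw [dssmp_mulVec_negSingle]
      have hcfi : cf i = 0 := by rw [hcf i, ← h, neg_zero]
      have hsupcf : (⨆ x, cf x) = 0 := by
        refine le_antisymm (ciSup_le fun x => ?_) (hcfi ▸ le_ciSup (dssmp_bdd cf) i)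
        rw [hcf x]
        linarith [hB0 x j]
      have hcpj' : cp j' = 0 := by simp [hcpdef, hj']
      have hsupcp : (⨆ x, cp x) = 0 := by
        refine le_antisymm (ciSup_le fun x => ?_) (hcpj' ▸ le_ciSup (dssmp_bdd cp) j')
        by_cases hx : x = j <;> simp [hcpdef, hx]
      have h2 := hstrong cf cp 0 0 (adm cp 0) le_rfl
        (by rw [hsupcf, hsupcp, max_self]) hsupcf
      have := h2.2 j
      simp [hcpdef] at this
  · rintro ⟨ha, hb, hc⟩
    have hsum : ∀ i, (∑ j, (-(Kff⁻¹ * Kfp)) i j) = 1 := by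
      intro i
      have := hc i
      simpa [Matrix.mulVec, dotProduct] using this
    have hweak : ∀ (cf : Fin nf → ℝ) (cp : Fin np → ℝ) (r : Fin nf → ℝ),
        Kff.mulVec cf + Kfp.mulVec cp = r → r ≤ 0 →
        (⨆ i, cf i) ≤ (⨆ j, cp j) := by
      intro cf cp r heq hr
      rw [dssmp_adm_iff hKff] at heq
      refine ciSup_le fun i => ?_
      have h1 : (Kff⁻¹).mulVec r i ≤ 0 := by
        show (∑ k, Kff⁻¹ i k * r k) ≤ 0
        refine Finset.sum_nonpos fun k _ => ?_
        exact mul_nonpos_iff.mpr (Or.inl ⟨(ha i k).le, hr k⟩)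
      have h2 : (-(Kff⁻¹ * Kfp)).mulVec cp i ≤ ⨆ j, cp j := by
        have hle : (∑ j, (-(Kff⁻¹ * Kfp)) i j * cp j) ≤
            ∑ j, (-(Kff⁻¹ * Kfp)) i j * (⨆ j', cp j') :=
          Finset.sum_le_sum fun j _ =>
            mul_le_mul_of_nonneg_left (le_ciSup (dssmp_bdd cp) j) (hb i j).le
        calc (-(Kff⁻¹ * Kfp)).mulVec cp i
            = ∑ j, (-(Kff⁻¹ * Kfp)) i j * cp j := rfl
          _ ≤ ∑ j, (-(Kff⁻¹ * Kfp)) i j * (⨆ j', cp j') := hle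
          _ = (∑ j, (-(Kff⁻¹ * Kfp)) i j) * (⨆ j', cp j') := by rw [Finset.sum_mul]
          _ = ⨆ j', cp j' := by rw [hsum i, one_mul]
      rw [heq]
      simp only [Pi.add_apply]
      linarith
    refine ⟨fun cf cp r heq hr => max_eq_right_iff.mpr (hweak cf cp r heq hr), ?_⟩
    intro cf cp r m heq hr hmax hsf
    have hw := hweak cf cp r heq hr
    have hm : (⨆ j, cp j) = m := by rw [← hmax, max_eq_right hw]
    rw [dssmp_adm_iff hKff] at heq
    obtain ⟨i0, hi0⟩ := Finite.exists_max cf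
    have hsup_eq : (⨆ i, cf i) = cf i0 :=
      le_antisymm (ciSup_le hi0) (le_ciSup (dssmp_bdd cf) i0)
    have hcfi0 : cf i0 = m := by rw [← hsup_eq, hsf]
    have hS1 : (∑ k, Kff⁻¹ i0 k * r k) ≤ 0 :=
      Finset.sum_nonpos fun k _ => mul_nonpos_iff.mpr (Or.inl ⟨(ha i0 k).le, hr k⟩)
    have htermle : ∀ j ∈ Finset.univ, (-(Kff⁻¹ * Kfp)) i0 j * cp j ≤
        (-(Kff⁻¹ * Kfp)) i0 j * m := fun j _ =>
      mul_le_mul_of_nonneg_left (hm ▸ le_ciSup (dssmp_bdd cp) j) (hb i0 j).le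
    have hsumM : (∑ j, (-(Kff⁻¹ * Kfp)) i0 j * m) = m := by
      rw [← Finset.sum_mul, hsum i0, one_mul]
    have hS2 : (∑ j, (-(Kff⁻¹ * Kfp)) i0 j * cp j) ≤ m := by
      calc (∑ j, (-(Kff⁻¹ * Kfp)) i0 j * cp j) ≤ ∑ j, (-(Kff⁻¹ * Kfp)) i0 j * m :=
            Finset.sum_le_sum htermle
        _ = m := hsumM
    have hexp : cf i0 = (∑ k, Kff⁻¹ i0 k * r k) + (∑ j, (-(Kff⁻¹ * Kfp)) i0 j * cp j) := by
      rw [heq]; rfl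
    have hS1eq : (∑ k, Kff⁻¹ i0 k * r k) = 0 := by
      rw [hexp] at hcfi0; linarith
    have hS2eq : (∑ j, (-(Kff⁻¹ * Kfp)) i0 j * cp j) = m := by
      rw [hexp] at hcfi0; linarith
    have hr0 : r = 0 := by
      funext k
      have := (Finset.sum_eq_zero_iff_of_nonpos
        (fun k _ => mul_nonpos_iff.mpr (Or.inl ⟨(ha i0 k).le, hr k⟩))).mp hS1eq k
        (Finset.mem_univ k)
      have hne : Kff⁻¹ i0 k ≠ 0 := ne_of_gt (ha i0 k)
      rcases mul_eq_zero.mp this with h | h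
      · exact absurd h hne
      · exact h
    have hcp : ∀ j, cp j = m := by
      have heqsum := (Finset.sum_eq_sum_iff_of_le htermle).mp (by rw [hS2eq, hsumM])
      intro j
      have h3 := heqsum j (Finset.mem_univ j)
      exact mul_left_cancel₀ (ne_of_gt (hb i0 j)) h3.symm |>.symm
    refine ⟨?_, hcp⟩
    intro i
    have hcpfun : cp = fun _ => m := funext hcp
    rw [heq, hr0, Matrix.mulVec_zero, hcpfun]
    simp only [Pi.add_apply, Pi.zero_apply, zero_add]
    show (∑ j, (-(Kff⁻¹ * Kfp)) i j * m) = m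
    rw [← Finset.sum_mul, hsum i, one_mul]
end

section
/- Sufficient condition for the discrete weak comparison principle: Suppose K_ff⁻¹ ⪰ 0, −K_ff⁻¹ K_fp ⪰ 0, and −K_ff⁻¹ K_fp 1 ⪯ 1 (the conditions characterizing the discrete weak maximum principle). Then the discrete weak comparison principle holds: for any two admissible triples (c_f⁽¹⁾, c_p⁽¹⁾, r⁽¹⁾) and (c_f⁽²⁾, c_p⁽²⁾, r⁽²⁾) with c_p⁽¹⁾ ⪯ c_p⁽²⁾ and r⁽¹⁾ ⪯ r⁽²⁾, one has c⁽¹⁾ ⪯ c⁽²⁾ componentwise, i.e., c_f⁽¹⁾ ⪯ c_f⁽²⁾ and c_p⁽¹⁾ ⪯ c_p⁽²⁾. -/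
/-- Sufficient condition for the discrete weak comparison principle. -/
theorem discrete_weak_comparison_principle
    (nf np : ℕ) (hnf : 1 ≤ nf) (hnp : 1 ≤ np)
    (Kff : Matrix (Fin nf) (Fin nf) ℝ) (Kfp : Matrix (Fin nf) (Fin np) ℝ)
    (hKff : IsUnit Kff.det)
    (ha : ∀ i j, 0 ≤ Kff⁻¹ i j)
    (hb : ∀ i j, 0 ≤ (-(Kff⁻¹ * Kfp)) i j)
    (hc : ∀ i, (-(Kff⁻¹ * Kfp)).mulVec 1 i ≤ 1) :
    ∀ (cf₁ : Fin nf → ℝ) (cp₁ : Fin np → ℝ) (r₁ : Fin nf → ℝ)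
      (cf₂ : Fin nf → ℝ) (cp₂ : Fin np → ℝ) (r₂ : Fin nf → ℝ),
      Kff.mulVec cf₁ + Kfp.mulVec cp₁ = r₁ →
      Kff.mulVec cf₂ + Kfp.mulVec cp₂ = r₂ →
      cp₁ ≤ cp₂ → r₁ ≤ r₂ → cf₁ ≤ cf₂ ∧ cp₁ ≤ cp₂ := by
  intro cf₁ cp₁ r₁ cf₂ cp₂ r₂ h1 h2 hcp hr
  refine ⟨?_, hcp⟩
  have key : ∀ (cf : Fin nf → ℝ) (cp : Fin np → ℝ) (r : Fin nf → ℝ),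
      Kff.mulVec cf + Kfp.mulVec cp = r →
      cf = Kff⁻¹.mulVec r - (Kff⁻¹ * Kfp).mulVec cp := by
    intro cf cp r h
    have h' : Kff.mulVec cf = r - Kfp.mulVec cp := by
      rw [← h]; abel
    have := congrArg (Kff⁻¹.mulVec ·) h'
    simp only [Matrix.mulVec_mulVec] at this ⊢
    rwa [Matrix.nonsing_inv_mul Kff hKff, Matrix.one_mulVec,
      Matrix.mulVec_sub, Matrix.mulVec_mulVec] at this
  rw [key cf₁ cp₁ r₁ h1, key cf₂ cp₂ r₂ h2]
  intro i
  simp only [Pi.sub_apply, Matrix.mulVec, dotProduct]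
  have e1 : ∑ x, Kff⁻¹ i x * r₁ x ≤ ∑ x, Kff⁻¹ i x * r₂ x :=
    Finset.sum_le_sum fun j _ => mul_le_mul_of_nonneg_left (hr j) (ha i j)
  have e2 : ∑ x, (Kff⁻¹ * Kfp) i x * cp₂ x ≤ ∑ x, (Kff⁻¹ * Kfp) i x * cp₁ x := by
    apply Finset.sum_le_sum
    intro j _
    have hb' : (Kff⁻¹ * Kfp) i j ≤ 0 := by
      have := hb i j; simp at this; linarith
    nlinarith [hcp j]
  linarith
end

section
/- Sufficient condition for the discrete strong comparison principle: Suppose K_ff⁻¹ ≻ 0 (all entries strictly positive), −K_ff⁻¹ K_fp ≻ 0 (all entries strictly positive), and either −K_ff⁻¹ K_fp 1 ≺ 1 or −K_ff⁻¹ K_fp 1 = 1 (the conditions characterizing the discrete strong maximum principle). Then the discrete strong comparison principle holds: for any two admissible triples (c_f⁽¹⁾, c_p⁽¹⁾, r⁽¹⁾) and (c_f⁽²⁾, c_p⁽²⁾, r⁽²⁾) with c_p⁽¹⁾ ⪯ c_p⁽²⁾ and r⁽¹⁾ ≺ r⁽²⁾ (strict componentwise inequality), one has c_f⁽¹⁾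 ≺ c_f⁽²⁾ (strict componentwise inequality on the free components). -/
lemma cf_formula {nf np : ℕ}
    (Kff : Matrix (Fin nf) (Fin nf) ℝ) (Kfp : Matrix (Fin nf) (Fin np) ℝ)
    (hKff : IsUnit Kff.det) (cf : Fin nf → ℝ) (cp : Fin np → ℝ) (r : Fin nf → ℝ)
    (h : Kff.mulVec cf + Kfp.mulVec cp = r) :
    cf = Kff⁻¹.mulVec r - (Kff⁻¹ * Kfp).mulVec cp := by
  have h1 : Kff.mulVec cf = r - Kfp.mulVec cp := by
    rw [← h]; ring
  have h2 : Kff⁻¹.mulVec (Kff.mulVec cf) = Kff⁻¹.mulVec (r - Kfp.mulVec cp) := by rw [h1]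
  rw [Matrix.mulVec_mulVec, Matrix.nonsing_inv_mul _ hKff, Matrix.one_mulVec,
    Matrix.mulVec_sub] at h2
  rw [← Matrix.mulVec_mulVec]
  exact h2

/-- Sufficient condition for the discrete strong comparison principle. -/
theorem discrete_strong_comparison_principle
    (nf np : ℕ) (hnf : 1 ≤ nf) (hnp : 1 ≤ np)
    (Kff : Matrix (Fin nf) (Fin nf) ℝ) (Kfp : Matrix (Fin nf) (Fin np) ℝ)
    (hKff : IsUnit Kff.det)
    (ha : ∀ i j, 0 < Kff⁻¹ i j)
    (hb : ∀ i j, 0 < (-(Kff⁻¹ * Kfp)) i j)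
    (hc : (∀ i, (-(Kff⁻¹ * Kfp)).mulVec 1 i < 1) ∨
          (∀ i, (-(Kff⁻¹ * Kfp)).mulVec 1 i = 1)) :
    ∀ (cf₁ : Fin nf → ℝ) (cp₁ : Fin np → ℝ) (r₁ : Fin nf → ℝ)
      (cf₂ : Fin nf → ℝ) (cp₂ : Fin np → ℝ) (r₂ : Fin nf → ℝ),
      Kff.mulVec cf₁ + Kfp.mulVec cp₁ = r₁ →
      Kff.mulVec cf₂ + Kfp.mulVec cp₂ = r₂ →
      cp₁ ≤ cp₂ → (∀ i, r₁ i < r₂ i) → ∀ i, cf₁ i < cf₂ i := by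
  intro cf₁ cp₁ r₁ cf₂ cp₂ r₂ h1 h2 hcp hr i
  have e1 := cf_formula Kff Kfp hKff cf₁ cp₁ r₁ h1
  have e2 := cf_formula Kff Kfp hKff cf₂ cp₂ r₂ h2
  have key : cf₂ i - cf₁ i =
      (∑ j, Kff⁻¹ i j * (r₂ j - r₁ j)) + ∑ j, (-(Kff⁻¹ * Kfp)) i j * (cp₂ j - cp₁ j) := by
    rw [e1, e2]
    simp only [Pi.sub_apply, Matrix.mulVec, dotProduct, Matrix.neg_apply]
    have A : ∑ j, Kff⁻¹ i j * (r₂ j - r₁ j)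
        = ∑ j, Kff⁻¹ i j * r₂ j - ∑ j, Kff⁻¹ i j * r₁ j := by
      rw [← Finset.sum_sub_distrib]; exact Finset.sum_congr rfl fun j _ => by ring
    have B : ∑ j, -(Kff⁻¹ * Kfp) i j * (cp₂ j - cp₁ j)
        = ∑ j, (Kff⁻¹ * Kfp) i j * cp₁ j - ∑ j, (Kff⁻¹ * Kfp) i j * cp₂ j := by
      rw [← Finset.sum_sub_distrib]; exact Finset.sum_congr rfl fun j _ => by ring
    rw [A, B]; ring
  have hpos : 0 < ∑ j, Kff⁻¹ i j * (r₂ j - r₁ j) := by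
    apply Finset.sum_pos
    · intro j _
      exact mul_pos (ha i j) (sub_pos.mpr (hr j))
    · exact Finset.univ_nonempty_iff.mpr ⟨⟨0, hnf⟩⟩
  have hnn : 0 ≤ ∑ j, (-(Kff⁻¹ * Kfp)) i j * (cp₂ j - cp₁ j) := by
    apply Finset.sum_nonneg
    intro j _
    exact mul_nonneg (le_of_lt (hb i j)) (sub_nonneg.mpr (hcp j))
  linarith [key]
end

section
/- Cotangent identity for linear basis functions on a triangle: Let x_p, x_q, x_r ∈ ℝ² be affinely independent points forming a triangle T, and let φ_p (respectively φ_q) be the unique affine function ℝ² → ℝ equal to 1 at x_p and 0 at x_q and x_r (respectively equal to 1 at x_q and 0 at x_p and x_r). Let g_p and g_q denote the (constant) gradients of φ_p and φ_q, and let β_pq be the interior angle of T at the vertex x_r (the angle at x_r between the edges x_r x_p and x_r x_q; equivalently, cos β_pq = −n_p·n_q where n_p, n_q are the unit inward normals to the edges opposite x_p and x_q). Then area(T)·(g_p · g_q) = −(1/2)·cot(β_pq). -/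
/-!
Put `u = x_p - x_r` and `v = x_q - x_r`. The interpolation conditions say that `g_p, g_q` is the
dual basis of `u, v`, which in the plane is `g_p = (v₁, -v₀) / D`, `g_q = (-u₁, u₀) / D` with
`D = det(u, v) = ±2 area(T)`; hence `D² ⟪g_p, g_q⟫ = -⟪u, v⟫`. On the other hand Lagrange's
identity `‖u‖²‖v‖² - ⟪u, v⟫² = D²` gives `sin β · ‖u‖‖v‖ = |D|`, so `cot β = ⟪u, v⟫ / |D|`.
-/

open InnerProductGeometry RealInnerProductSpace

theorem InnerProductGeometry.cot_angle {V : Type*} [NormedAddCommGroup V]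
    [InnerProductSpace ℝ V] (x y : V) :
    Real.cot (angle x y) = ⟪x, y⟫ / √(⟪x, x⟫ * ⟪y, y⟫ - ⟪x, y⟫ * ⟪x, y⟫) := by
  rcases eq_or_ne x 0 with rfl | hx
  · simp [Real.cot_eq_cos_div_sin]
  rcases eq_or_ne y 0 with rfl | hy
  · simp [Real.cot_eq_cos_div_sin]
  have hxy : ‖x‖ * ‖y‖ ≠ 0 := by positivity
  rw [Real.cot_eq_cos_div_sin, ← sin_angle_mul_norm_mul_norm, ← cos_angle_mul_norm_mul_norm,
    mul_div_mul_right _ _ hxy]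

namespace EuclideanSpace

def det2 (u v : EuclideanSpace ℝ (Fin 2)) : ℝ := u 0 * v 1 - u 1 * v 0

theorem inner_fin_two (x y : EuclideanSpace ℝ (Fin 2)) : ⟪x, y⟫ = x 0 * y 0 + x 1 * y 1 := by
  simp [PiLp.inner_apply, Fin.sum_univ_two, mul_comm]

theorem inner_self_mul_inner_self_sub_inner_mul_inner (u v : EuclideanSpace ℝ (Fin 2)) :
    ⟪u, u⟫ * ⟪v, v⟫ - ⟪u, v⟫ * ⟪u, v⟫ = det2 u v ^ 2 := by
  simp only [inner_fin_two, det2]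
  ring

theorem cot_angle_eq_inner_div_abs_det2 (u v : EuclideanSpace ℝ (Fin 2)) :
    Real.cot (angle u v) = ⟪u, v⟫ / |det2 u v| := by
  rw [cot_angle, inner_self_mul_inner_self_sub_inner_mul_inner, Real.sqrt_sq_eq_abs]

section DualBasis

variable {u v a b : EuclideanSpace ℝ (Fin 2)}

theorem det2_ne_zero_of_dual (hau : ⟪a, u⟫ = 1) (hav : ⟪a, v⟫ = 0) (hbv : ⟪b, v⟫ = 1) :
    det2 u v ≠ 0 := by
  rw [inner_fin_two] at hau hav hbv
  intro h
  have : (a 0 * b 1 - a 1 * b 0) * det2 u v = 1 := by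
    unfold det2
    linear_combination (b 0 * v 0 + b 1 * v 1) * hau + hbv - (b 0 * u 0 + b 1 * u 1) * hav
  simp [h] at this

theorem det2_sq_mul_inner_of_dual (hau : ⟪a, u⟫ = 1) (hav : ⟪a, v⟫ = 0) (hbu : ⟪b, u⟫ = 0)
    (hbv : ⟪b, v⟫ = 1) : det2 u v ^ 2 * ⟪a, b⟫ = -⟪u, v⟫ := by
  rw [inner_fin_two] at hau hav hbu hbv
  have ha0 : a 0 * det2 u v = v 1 := by unfold det2; linear_combination v 1 * hau - u 1 * hav
  have ha1 : a 1 * det2 u v = -v 0 := by unfold det2; linear_combination u 0 * hav - v 0 * hau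
  have hb0 : b 0 * det2 u v = -u 1 := by unfold det2; linear_combination v 1 * hbu - u 1 * hbv
  have hb1 : b 1 * det2 u v = u 0 := by unfold det2; linear_combination u 0 * hbv - v 0 * hbu
  rw [inner_fin_two, inner_fin_two]
  linear_combination (b 0 * det2 u v) * ha0 + v 1 * hb0 + (b 1 * det2 u v) * ha1 - v 0 * hb1

end DualBasis

end EuclideanSpace

open EuclideanSpace in
theorem triangle_basis_gradient_cot_identity_general
    (xp xq xr : EuclideanSpace ℝ (Fin 2))
    (φp φq : EuclideanSpace ℝ (Fin 2) → ℝ)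
    (gp gq : EuclideanSpace ℝ (Fin 2)) (kp kq : ℝ)
    (hφp : ∀ y, φp y = (inner ℝ gp y : ℝ) + kp)
    (hφq : ∀ y, φq y = (inner ℝ gq y : ℝ) + kq)
    (hpp : φp xp = 1) (hpq : φp xq = 0) (hpr : φp xr = 0)
    (hqq : φq xq = 1) (hqp : φq xp = 0) (hqr : φq xr = 0) :
    ((1 : ℝ)/2) * |(xq 0 - xp 0) * (xr 1 - xp 1) - (xq 1 - xp 1) * (xr 0 - xp 0)| *
        (inner ℝ gp gq : ℝ)
      = -(1/2) * Real.cot (EuclideanGeometry.angle xp xr xq) := by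
  have hpu : ⟪gp, xp - xr⟫ = 1 := by rw [inner_sub_right]; linarith [hφp xp, hφp xr]
  have hpv : ⟪gp, xq - xr⟫ = 0 := by rw [inner_sub_right]; linarith [hφp xq, hφp xr]
  have hqu : ⟪gq, xp - xr⟫ = 0 := by rw [inner_sub_right]; linarith [hφq xp, hφq xr]
  have hqv : ⟪gq, xq - xr⟫ = 1 := by rw [inner_sub_right]; linarith [hφq xq, hφq xr]
  have harea : (xq 0 - xp 0) * (xr 1 - xp 1) - (xq 1 - xp 1) * (xr 0 - xp 0)
      = det2 (xp - xr) (xq - xr) := by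
    simp only [det2, PiLp.sub_apply]
    ring
  have hD : |det2 (xp - xr) (xq - xr)| ≠ 0 := abs_ne_zero.2 (det2_ne_zero_of_dual hpu hpv hqv)
  rw [harea, EuclideanGeometry.angle, vsub_eq_sub, vsub_eq_sub, cot_angle_eq_inner_div_abs_det2]
  field_simp
  rw [sq_abs]
  linear_combination det2_sq_mul_inner_of_dual hpu hpv hqu hqv

/-- Cotangent identity for the gradients of linear nodal basis functions on a
triangle: `area(T) * (g_p ⬝ g_q) = -(1/2) cot β_pq`, where `β_pq` is the
interior angle at the vertex `x_r`. -/
theorem triangle_basis_gradient_cot_identity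
    (xp xq xr : EuclideanSpace ℝ (Fin 2))
    (hind : AffineIndependent ℝ ![xp, xq, xr])
    (φp φq : EuclideanSpace ℝ (Fin 2) → ℝ)
    (gp gq : EuclideanSpace ℝ (Fin 2)) (kp kq : ℝ)
    (hφp : ∀ y, φp y = (inner ℝ gp y : ℝ) + kp)
    (hφq : ∀ y, φq y = (inner ℝ gq y : ℝ) + kq)
    (hpp : φp xp = 1) (hpq : φp xq = 0) (hpr : φp xr = 0)
    (hqq : φq xq = 1) (hqp : φq xp = 0) (hqr : φq xr = 0) :
    ((1 : ℝ)/2) * |(xq 0 - xp 0) * (xr 1 - xp 1) - (xq 1 - xp 1) * (xr 0 - xp 0)| *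
        (inner ℝ gp gq : ℝ)
      = -(1/2) * Real.cot (EuclideanGeometry.angle xp xr xq) :=
  triangle_basis_gradient_cot_identity_general xp xq xr φp φq gp gq kp kq hφp hφq hpp hpq hpr hqq
    hqp hqr
end

section
/- Mesh restriction for the T3 element with heterogeneous isotropic diffusivity: Let a, b ∈ ℝ with b > 0 and let D̃ > 0. Consider the 3×3 element stiffness matrix K = (D̃/(2b))·M, where M has rows (b² + (a−1)², a − a² − b², a−1), (a − a² − b², a² + b², −a), (a−1, −a, 1) (this is the local stiffness matrix of the single-field Galerkin formulation for isotropic diffusion on the triangle with vertices (0,0), (1,0), (a,b), with D̃ the element average diffusivity). Then all diagonal entries of K are strictly positive, and the off-diagonal entries satisfy K₁₂ ≤ 0, K₁₃ ≤ 0 and K₂₃ ≤ 0 if and only if (a − 1/2)² + b² ≥ 1/4, a ≤ 1, and a ≥ 0. Consequently, under these three inequalities K is weakly diagonally dominant, since each row of K sums to zero. -/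
/-- Mesh restriction for the T3 element with heterogeneous isotropic
diffusivity: the diagonal entries of the local stiffness matrix are positive,
the off-diagonal entries are non-positive iff `(a-1/2)² + b² ≥ 1/4`, `a ≤ 1`
and `a ≥ 0`, and under these inequalities the matrix is weakly diagonally
dominant. -/
theorem t3_isotropic_mesh_restriction
    (a b Dtil : ℝ) (hb : 0 < b) (hD : 0 < Dtil)
    (K : Matrix (Fin 3) (Fin 3) ℝ)
    (hK : K = (Dtil / (2 * b)) •
      Matrix.of ![![b ^ 2 + (a - 1) ^ 2, a - a ^ 2 - b ^ 2, a - 1],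
                  ![a - a ^ 2 - b ^ 2, a ^ 2 + b ^ 2, -a],
                  ![a - 1, -a, 1]]) :
    (∀ i, 0 < K i i) ∧
    ((K 0 1 ≤ 0 ∧ K 0 2 ≤ 0 ∧ K 1 2 ≤ 0) ↔
      ((a - 1 / 2) ^ 2 + b ^ 2 ≥ 1 / 4 ∧ a ≤ 1 ∧ 0 ≤ a)) ∧
    (((a - 1 / 2) ^ 2 + b ^ 2 ≥ 1 / 4 ∧ a ≤ 1 ∧ 0 ≤ a) →
      ∀ i, ∑ j ∈ Finset.univ.erase i, |K i j| ≤ |K i i|) := by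
  have hc : 0 < Dtil / (2 * b) := div_pos hD (by linarith)
  subst hK
  simp only [Matrix.smul_apply, Matrix.of_apply, smul_eq_mul]
  refine ⟨?_, ?_, ?_⟩
  · intro i
    fin_cases i <;>
      simp only [Fin.zero_eta, Fin.mk_one, Fin.reduceFinMk, Fin.isValue,
        Matrix.cons_val_zero, Matrix.cons_val_one, Matrix.head_cons,
        Matrix.cons_val_two, Matrix.tail_cons] <;>
      exact mul_pos hc (by nlinarith [sq_nonneg (a - 1), sq_nonneg a, mul_pos hb hb])
  · simp only [Matrix.cons_val_zero, Matrix.cons_val_one, Matrix.head_cons,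
      Matrix.cons_val_two, Matrix.tail_cons]
    constructor
    · rintro ⟨h1, h2, h3⟩
      refine ⟨?_, ?_, ?_⟩
      · nlinarith
      · nlinarith
      · nlinarith
    · rintro ⟨h1, h2, h3⟩
      refine ⟨?_, ?_, ?_⟩
      · nlinarith
      · nlinarith
      · nlinarith
  · rintro ⟨h1, h2, h3⟩ i
    have e0 : (Finset.univ.erase (0 : Fin 3)) = {1, 2} := by decide
    have e1 : (Finset.univ.erase (1 : Fin 3)) = {0, 2} := by decide
    have e2 : (Finset.univ.erase (2 : Fin 3)) = {0, 1} := by decide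
    have hx : a - a ^ 2 - b ^ 2 ≤ 0 := by nlinarith
    fin_cases i <;>
      simp only [Fin.zero_eta, Fin.mk_one, Fin.reduceFinMk, Fin.isValue]
    · rw [e0]
      rw [Finset.sum_insert (by decide), Finset.sum_singleton]
      simp only [Matrix.cons_val_zero, Matrix.cons_val_one, Matrix.head_cons,
        Matrix.cons_val_two, Matrix.tail_cons, Fin.isValue]
      rw [abs_of_nonpos (by nlinarith), abs_of_nonpos (by nlinarith),
        abs_of_nonneg (by nlinarith [sq_nonneg (a - 1)])]
      nlinarith
    · rw [e1]
      rw [Finset.sum_insert (by decide), Finset.sum_singleton]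
      simp only [Matrix.cons_val_zero, Matrix.cons_val_one, Matrix.head_cons,
        Matrix.cons_val_two, Matrix.tail_cons, Fin.isValue]
      rw [abs_of_nonpos (by nlinarith), abs_of_nonpos (by nlinarith),
        abs_of_nonneg (by nlinarith)]
      nlinarith
    · rw [e2]
      rw [Finset.sum_insert (by decide), Finset.sum_singleton]
      simp only [Matrix.cons_val_zero, Matrix.cons_val_one, Matrix.head_cons,
        Matrix.cons_val_two, Matrix.tail_cons, Fin.isValue]
      rw [abs_of_nonpos (by nlinarith), abs_of_nonpos (by nlinarith),
        abs_of_nonneg (by nlinarith)]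
      nlinarith
end

section
/- Mesh restriction for the T3 element with anisotropic diffusivity (off-diagonal condition): Let D̃ be a symmetric 2×2 real matrix with entries D̃_xx, D̃_xy, D̃_yy satisfying D̃_xx > 0, D̃_yy > 0 and D̃_xx·D̃_yy > D̃_xy², and set ε = D̃_yy/D̃_xx > 0 and η = D̃_xy/D̃_xx (so that −√ε < η < √ε). Let a ∈ ℝ and b > 0. Then the three off-diagonal entries of the T3 anisotropic element stiffness matrix are non-positive, i.e., K₁₂ = −(D̃_xx b² + D̃_xy(b − 2ab) + D̃_yy a(a−1))/(2b) ≤ 0, K₁₃ = (−D̃_xy b + D̃_yy(a−1))/(2b) ≤ 0, and K₂₃ = (D̃_xy b − D̃_yy a)/(2b) ≤ 0, if and only if the following three inequalities hold: (a − 1/2)² + (b/√ε)² − 2b(η/ε)(a − 1/2) ≥ 1/4, (a−1)/b ≤ η/ε, and a/b ≥ η/ε. -/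
/-- Mesh restriction for the T3 element with anisotropic diffusivity:
the off-diagonal entries of the local stiffness matrix are non-positive iff
the three geometric inequalities in `ε = D̃yy/D̃xx` and `η = D̃xy/D̃xx` hold. -/
theorem t3_anisotropic_offdiagonal_condition
    (Dxx Dxy Dyy : ℝ) (hxx : 0 < Dxx) (hyy : 0 < Dyy)
    (hdet : Dxy ^ 2 < Dxx * Dyy)
    (ε η : ℝ) (hε : ε = Dyy / Dxx) (hη : η = Dxy / Dxx)
    (a b : ℝ) (hb : 0 < b) :
    (-(Dxx * b ^ 2 + Dxy * (b - 2 * a * b) + Dyy * a * (a - 1)) / (2 * b) ≤ 0 ∧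
     (-Dxy * b + Dyy * (a - 1)) / (2 * b) ≤ 0 ∧
     (Dxy * b - Dyy * a) / (2 * b) ≤ 0) ↔
    ((a - 1 / 2) ^ 2 + (b / Real.sqrt ε) ^ 2 - 2 * b * (η / ε) * (a - 1 / 2)
        ≥ 1 / 4 ∧
     (a - 1) / b ≤ η / ε ∧
     a / b ≥ η / ε) := by
  have hε0 : 0 < ε := by rw [hε]; positivity
  have hratio : η / ε = Dxy / Dyy := by
    rw [hε, hη]; field_simp
  have hsq : (b / Real.sqrt ε) ^ 2 = b ^ 2 / ε := by
    rw [div_pow, Real.sq_sqrt hε0.le]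
  have h2b : (0:ℝ) < 2 * b := by positivity
  rw [hsq, hratio]
  have e1 : -(Dxx * b ^ 2 + Dxy * (b - 2 * a * b) + Dyy * a * (a - 1)) / (2 * b) ≤ 0
      ↔ 0 ≤ Dxx * b ^ 2 + Dxy * (b - 2 * a * b) + Dyy * a * (a - 1) := by
    rw [div_le_iff₀ h2b]; constructor <;> intro h <;> nlinarith
  have e1' : (a - 1 / 2) ^ 2 + b ^ 2 / ε - 2 * b * (Dxy / Dyy) * (a - 1 / 2) ≥ 1 / 4
      ↔ 0 ≤ Dxx * b ^ 2 + Dxy * (b - 2 * a * b) + Dyy * a * (a - 1) := by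
    rw [hε, ge_iff_le, ← sub_nonneg]
    have key : (a - 1 / 2) ^ 2 + b ^ 2 / (Dyy / Dxx) - 2 * b * (Dxy / Dyy) * (a - 1 / 2) - 1/4
        = (Dxx * b ^ 2 + Dxy * (b - 2 * a * b) + Dyy * a * (a - 1)) / Dyy := by
      field_simp
      ring
    rw [key]
    constructor <;> intro h
    · have := mul_nonneg h hyy.le
      rwa [div_mul_cancel₀ _ hyy.ne'] at this
    · positivity
  have e2 : (-Dxy * b + Dyy * (a - 1)) / (2 * b) ≤ 0 ↔ (a - 1) / b ≤ Dxy / Dyy := by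
    rw [div_le_iff₀ h2b, div_le_div_iff₀ hb hyy]
    constructor <;> intro h <;> nlinarith
  have e3 : (Dxy * b - Dyy * a) / (2 * b) ≤ 0 ↔ a / b ≥ Dxy / Dyy := by
    rw [div_le_iff₀ h2b, ge_iff_le, div_le_div_iff₀ hyy hb]
    constructor <;> intro h <;> nlinarith
  rw [e1, e1', e2, e3]
end
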